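/- arXiv:2311.11681 — 9 statements merged into one kernel-verified Lean document; each statement's English description precedes it below -/
import Mathlib

section
/- Assume Slater's condition holds. If (d, θ̂, ω, P) is an optimal solution of the ROLC problem, then there exist multipliers λ, μ ∈ ℝⁿ and ν⁻, ν⁺ ∈ ℝˡ such that the KKT conditions hold. -/
open Matrix Set


lemma lagrange_multipliers {E : Type*} [NormedAddCommGroup E] [NormedSpace ℝ E]
    {J : Type*} [Fintype J] [DecidableEq J]
    (f : E → ℝ) (g : J → E → ℝ)
    (hf : ∀ x y : E, ∀ a b : ℝ, 0 ≤ a → 0 ≤ b → a + b = 1 →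
      f (a • x + b • y) ≤ a * f x + b * f y)
    (hg : ∀ j, ∀ x y : E, ∀ a b : ℝ, 0 ≤ a → 0 ≤ b → a + b = 1 →
      g j (a • x + b • y) ≤ a * g j x + b * g j y)
    (xs : E) (hslater : ∀ j, g j xs < 0)
    (x0 : E) (hx0 : ∀ j, g j x0 ≤ 0)
    (hopt : ∀ x, (∀ j, g j x ≤ 0) → f x0 ≤ f x) :
    ∃ ν : J → ℝ, (∀ j, 0 ≤ ν j) ∧ (∀ j, ν j * g j x0 = 0) ∧
      ∀ x, f x0 ≤ f x + ∑ j, ν j * g j x := by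
  classical
  set A : Set (ℝ × (J → ℝ)) := {p | ∃ x, f x ≤ p.1 ∧ ∀ j, g j x ≤ p.2 j} with hA_def
  set Bs : Set (ℝ × (J → ℝ)) := (Set.Iio (f x0)) ×ˢ (Set.univ.pi fun _ : J => Set.Iio (0:ℝ)) with hBs_def
  have hBs_mem : ∀ p : ℝ × (J → ℝ), p ∈ Bs ↔ (p.1 < f x0 ∧ ∀ j, p.2 j < 0) := by
    intro p
    constructor
    · rintro ⟨h1, h2⟩
      exact ⟨h1, fun j => h2 j (Set.mem_univ j)⟩
    · rintro ⟨h1, h2⟩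
      exact ⟨h1, fun j _ => h2 j⟩
  have hAconv : Convex ℝ A := by
    rintro p ⟨x, hx1, hx2⟩ q ⟨y, hy1, hy2⟩ a b ha hb hab
    refine ⟨a • x + b • y, ?_, ?_⟩
    · calc f (a • x + b • y) ≤ a * f x + b * f y := hf x y a b ha hb hab
        _ ≤ a * p.1 + b * q.1 :=
            add_le_add (mul_le_mul_of_nonneg_left hx1 ha) (mul_le_mul_of_nonneg_left hy1 hb)
    · intro j
      calc g j (a • x + b • y) ≤ a * g j x + b * g j y := hg j x y a b ha hb hab
        _ ≤ a * p.2 j + b * q.2 j :=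
            add_le_add (mul_le_mul_of_nonneg_left (hx2 j) ha)
              (mul_le_mul_of_nonneg_left (hy2 j) hb)
  have hBconv : Convex ℝ Bs := (convex_Iio _).prod (convex_pi fun _ _ => convex_Iio _)
  have hBopen : IsOpen Bs := isOpen_Iio.prod (isOpen_set_pi Set.finite_univ fun _ _ => isOpen_Iio)
  have hdisj : Disjoint Bs A := by
    rw [Set.disjoint_left]
    rintro p hpB ⟨x, hx1, hx2⟩
    rw [hBs_mem] at hpB
    have hxf : ∀ j, g j x ≤ 0 := fun j => (hx2 j).trans (hpB.2 j).le
    exact absurd (hopt x hxf) (by linarith [hpB.1])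
  obtain ⟨φ, c, hφB, hφA⟩ := geometric_hahn_banach_open hBconv hBopen hAconv hdisj
  set α : ℝ := φ (1, 0) with hα_def
  set ν0 : J → ℝ := fun j => φ (0, Pi.single j 1) with hν0_def
  -- decomposition of φ
  have hdecomp : ∀ p : ℝ × (J → ℝ), φ p = p.1 * α + ∑ j, p.2 j * ν0 j := by
    intro p
    have hp : p = p.1 • (((1:ℝ), (0 : J → ℝ)) : ℝ × (J → ℝ))
        + ∑ j, p.2 j • (((0:ℝ), Pi.single j (1:ℝ)) : ℝ × (J → ℝ)) := by
      apply Prod.ext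
      · simp [Prod.fst_sum]
      · funext k
        simp only [Prod.snd_add, Prod.snd_sum, Prod.smul_snd, Pi.add_apply, Finset.sum_apply,
          Pi.smul_apply, Pi.single_apply, smul_eq_mul, mul_ite, mul_one, mul_zero,
          Finset.sum_ite_eq', Finset.mem_univ, if_true]
        simp
    conv_lhs => rw [hp]
    rw [map_add, φ.map_smul, map_sum]
    simp only [smul_eq_mul]
    congr 1
    refine Finset.sum_congr rfl fun j _ => ?_
    rw [φ.map_smul, smul_eq_mul]
  -- directions staying in Bs have nonpositive functional value
  have hkey : ∀ v : ℝ × (J → ℝ), (∀ t : ℝ, 0 ≤ t → ((f x0 - 1, fun _ => (-1:ℝ)) + t • v) ∈ Bs) →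
      φ v ≤ 0 := by
    intro v hv
    by_contra hneg
    push_neg at hneg
    set p0 : ℝ × (J → ℝ) := (f x0 - 1, fun _ => (-1:ℝ)) with hp0
    set t : ℝ := max 0 ((c + 1 - φ p0) / φ v) with ht
    have ht0 : 0 ≤ t := le_max_left _ _
    have h1 : (c + 1 - φ p0) / φ v * φ v = c + 1 - φ p0 := div_mul_cancel₀ _ (ne_of_gt hneg)
    have h2 : c + 1 - φ p0 ≤ t * φ v := by
      calc c + 1 - φ p0 = ((c + 1 - φ p0) / φ v) * φ v := h1.symm
        _ ≤ t * φ v := mul_le_mul_of_nonneg_right (le_max_right _ _) hneg.le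
    have hlt := hφB _ (hv t ht0)
    rw [map_add, φ.map_smul, smul_eq_mul] at hlt
    linarith
  have hα0 : 0 ≤ α := by
    have hmem : ∀ t : ℝ, 0 ≤ t →
        ((f x0 - 1, fun _ => (-1:ℝ)) + t • ((((-1:ℝ), (0 : J → ℝ))) : ℝ × (J → ℝ))) ∈ Bs := by
      intro t ht
      rw [hBs_mem]
      constructor
      · show f x0 - 1 + t * (-1) < f x0
        linarith
      · intro j
        show (-1 : ℝ) + t * (0 : J → ℝ) j < 0
        simp
    have h := hkey _ hmem
    have heq : ((((-1:ℝ), (0 : J → ℝ))) : ℝ × (J → ℝ)) = -(((1:ℝ), (0 : J → ℝ)) : ℝ × (J → ℝ)) := by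
      apply Prod.ext <;> simp
    rw [heq, map_neg] at h
    linarith
  have hν00 : ∀ j, 0 ≤ ν0 j := by
    intro j
    have hmem : ∀ t : ℝ, 0 ≤ t →
        ((f x0 - 1, fun _ => (-1:ℝ)) + t • (((0:ℝ), -Pi.single j (1:ℝ)) : ℝ × (J → ℝ))) ∈ Bs := by
      intro t ht
      rw [hBs_mem]
      constructor
      · show f x0 - 1 + t * 0 < f x0
        linarith
      · intro k
        simp only [Prod.snd_add, Prod.smul_snd, Pi.add_apply, Pi.smul_apply, Pi.neg_apply,
          smul_eq_mul]
        rcases eq_or_ne k j with hk | hk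
        · subst hk
          rw [Pi.single_eq_same]
          nlinarith
        · rw [Pi.single_eq_of_ne hk]
          norm_num
    have h := hkey _ hmem
    have heq : (((0:ℝ), -Pi.single j (1:ℝ)) : ℝ × (J → ℝ)) = -(((0:ℝ), Pi.single j (1:ℝ)) : ℝ × (J → ℝ)) := by
      apply Prod.ext <;> simp
    rw [heq, map_neg] at h
    linarith
  have hαc : α * f x0 ≤ c := by
    by_contra hcon
    push_neg at hcon
    set Sν := ∑ j, ν0 j with hSν
    have hSν0 : 0 ≤ Sν := Finset.sum_nonneg fun j _ => hν00 j
    set ε : ℝ := (α * f x0 - c) / (α + Sν + 1) with hε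
    have hd : 0 < α + Sν + 1 := by linarith
    have hεpos : 0 < ε := div_pos (by linarith) hd
    have hmem : ((f x0 - ε, fun _ => -ε) : ℝ × (J → ℝ)) ∈ Bs := by
      rw [hBs_mem]
      exact ⟨show f x0 - ε < f x0 by linarith, fun j => show -ε < 0 by linarith⟩
    have hval : φ ((f x0 - ε, fun _ => -ε) : ℝ × (J → ℝ)) = (f x0 - ε) * α + ∑ j, (-ε) * ν0 j := by
      rw [hdecomp]
    have hlt := hφB _ hmem
    rw [hval] at hlt
    have hsum : ∑ j, (-ε) * ν0 j = -ε * Sν := by rw [hSν, Finset.mul_sum]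
    rw [hsum] at hlt
    have hεd : ε * (α + Sν + 1) = α * f x0 - c := div_mul_cancel₀ _ (ne_of_gt hd)
    nlinarith [hεpos, hα0, hSν0]
  have hAx : ∀ x : E, c ≤ α * f x + ∑ j, ν0 j * g j x := by
    intro x
    have hmem : ((f x, fun j => g j x) : ℝ × (J → ℝ)) ∈ A := ⟨x, le_refl _, fun j => le_refl _⟩
    have hval : φ ((f x, fun j => g j x) : ℝ × (J → ℝ)) = f x * α + ∑ j, g j x * ν0 j := by
      rw [hdecomp]
    have h := hφA _ hmem
    rw [hval] at h
    calc c ≤ f x * α + ∑ j, g j x * ν0 j := h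
      _ = α * f x + ∑ j, ν0 j * g j x := by
          rw [mul_comm]
          congr 1
          exact Finset.sum_congr rfl fun j _ => mul_comm _ _
  have hαpos : 0 < α := by
    rcases lt_or_eq_of_le hα0 with h | h
    · exact h
    exfalso
    have hα : α = 0 := h.symm
    have h1 := hAx xs
    rw [hα, zero_mul, zero_add] at h1
    have h2 : ∑ j, ν0 j * g j xs ≤ 0 :=
      Finset.sum_nonpos fun j _ => mul_nonpos_of_nonneg_of_nonpos (hν00 j) (hslater j).le
    have hc0 : 0 ≤ c := by
      have hx := hαc; rw [hα, zero_mul] at hx; exact hx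
    have hceq : c = 0 := le_antisymm (h1.trans h2) hc0
    have hsum0 : ∑ j, ν0 j * g j xs = 0 := le_antisymm h2 (hceq ▸ h1)
    have hall := (Finset.sum_eq_zero_iff_of_nonpos fun j _ =>
      mul_nonpos_of_nonneg_of_nonpos (hν00 j) (hslater j).le).mp hsum0
    have hν0z : ∀ j, ν0 j = 0 := by
      intro j
      rcases mul_eq_zero.mp (hall j (Finset.mem_univ j)) with h' | h'
      · exact h'
      · exact absurd h' (ne_of_lt (hslater j))
    have hφ0 : ∀ p : ℝ × (J → ℝ), φ p = 0 := by
      intro p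
      rw [hdecomp, hα]
      simp [hν0z]
    have hmemB : ((f x0 - 1, fun _ => (-1:ℝ)) : ℝ × (J → ℝ)) ∈ Bs := by
      rw [hBs_mem]
      exact ⟨show f x0 - 1 < f x0 by linarith, fun j => show (-1:ℝ) < 0 by norm_num⟩
    have h3 := hφB _ hmemB
    rw [hφ0] at h3
    have hmemA : ((f x0, fun j => g j x0) : ℝ × (J → ℝ)) ∈ A := ⟨x0, le_refl _, fun j => le_refl _⟩
    have h4 := hφA _ hmemA
    rw [hφ0] at h4
    linarith
  refine ⟨fun j => ν0 j / α, fun j => div_nonneg (hν00 j) hαpos.le, ?_, ?_⟩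
  · -- complementarity
    have h1 := hAx x0
    have h2 : ∑ j, ν0 j * g j x0 ≤ 0 :=
      Finset.sum_nonpos fun j _ => mul_nonpos_of_nonneg_of_nonpos (hν00 j) (hx0 j)
    have h3 : 0 ≤ ∑ j, ν0 j * g j x0 := by nlinarith [hαc]
    have hsum0 : ∑ j, ν0 j * g j x0 = 0 := le_antisymm h2 h3
    have hall := (Finset.sum_eq_zero_iff_of_nonpos fun j _ =>
      mul_nonpos_of_nonneg_of_nonpos (hν00 j) (hx0 j)).mp hsum0
    intro j
    rw [div_mul_eq_mul_div, hall j (Finset.mem_univ j), zero_div]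
  · intro x
    have h1 := le_trans hαc (hAx x)
    have h3 : ∑ j, ν0 j / α * g j x = (∑ j, ν0 j * g j x) / α := by
      rw [Finset.sum_div]
      exact Finset.sum_congr rfl fun j _ => by ring
    have h4 : f x + (∑ j, ν0 j * g j x) / α = (α * f x + ∑ j, ν0 j * g j x) / α := by
      field_simp
    rw [h3, h4, le_div_iff₀ hαpos, mul_comm]
    exact h1


lemma subdiff_interval (φ : ℝ → ℝ) (hφ : ConvexOn ℝ Set.univ φ) (d : ℝ) :
    ∃ p q : ℝ, p ≤ q ∧
      (∀ s, p ≤ s → s ≤ q → ∀ y, φ d + s * (y - d) ≤ φ y) ∧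
      (∀ ε, 0 < ε → ∃ y, d < y ∧ slope φ d y < q + ε) ∧
      (∀ ε, 0 < ε → ∃ y, y < d ∧ p - ε < slope φ d y) ∧
      (∀ y, d < y → q ≤ slope φ d y) ∧ (∀ y, y < d → slope φ d y ≤ p) := by
  have hmono : ∀ y1 y2 : ℝ, y1 ≠ d → y2 ≠ d → y1 ≤ y2 → slope φ d y1 ≤ slope φ d y2 := by
    intro y1 y2 h1 h2 h12
    exact hφ.slope_mono (Set.mem_univ d) ⟨Set.mem_univ _, h1⟩ ⟨Set.mem_univ _, h2⟩ h12
  set R : Set ℝ := slope φ d '' Set.Ioi d with hR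
  set L : Set ℝ := slope φ d '' Set.Iio d with hL
  have hRne : R.Nonempty := ⟨slope φ d (d + 1), ⟨d + 1, by simp, rfl⟩⟩
  have hLne : L.Nonempty := ⟨slope φ d (d - 1), ⟨d - 1, by simp, rfl⟩⟩
  have hRbdd : BddBelow R := by
    refine ⟨slope φ d (d - 1), ?_⟩
    rintro a ⟨y, hy, rfl⟩
    exact hmono _ _ (by norm_num) (ne_of_gt hy) (by linarith [mem_Ioi.mp hy])
  have hLbdd : BddAbove L := by
    refine ⟨slope φ d (d + 1), ?_⟩
    rintro a ⟨y, hy, rfl⟩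
    exact hmono _ _ (ne_of_lt hy) (by norm_num) (by linarith [mem_Iio.mp hy])
  set q : ℝ := sInf R with hq
  set p : ℝ := sSup L with hp
  have hLleR : ∀ a ∈ L, ∀ b ∈ R, a ≤ b := by
    rintro a ⟨y1, hy1, rfl⟩ b ⟨y2, hy2, rfl⟩
    exact hmono _ _ (ne_of_lt hy1) (ne_of_gt hy2) (le_of_lt (lt_trans hy1 hy2))
  have hpq : p ≤ q := by
    apply csSup_le hLne
    intro a ha
    exact le_csInf hRne fun b hb => hLleR a ha b hb
  have hqle : ∀ y, d < y → q ≤ slope φ d y := fun y hy => csInf_le hRbdd ⟨y, hy, rfl⟩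
  have hple : ∀ y, y < d → slope φ d y ≤ p := fun y hy => le_csSup hLbdd ⟨y, hy, rfl⟩
  refine ⟨p, q, hpq, ?_, ?_, ?_, hqle, hple⟩
  · intro s hps hsq y
    rcases lt_trichotomy y d with hy | hy | hy
    · have h1 : slope φ d y ≤ s := (hple y hy).trans hps
      have hne : y - d ≠ 0 := by intro h; apply absurd hy; simp; linarith [sub_eq_zero.mp h]
      have h2 : slope φ d y * (y - d) = φ y - φ d := by
        rw [slope_def_field, div_mul_cancel₀ _ hne]
      nlinarith [mul_le_mul_of_nonpos_right h1 (by linarith : y - d ≤ 0)]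
    · subst hy; simp
    · have h1 : s ≤ slope φ d y := hsq.trans (hqle y hy)
      have hne : y - d ≠ 0 := by intro h; apply absurd hy; simp; linarith [sub_eq_zero.mp h]
      have h2 : slope φ d y * (y - d) = φ y - φ d := by
        rw [slope_def_field, div_mul_cancel₀ _ hne]
      nlinarith [mul_le_mul_of_nonneg_right h1 (by linarith : (0:ℝ) ≤ y - d)]
  · intro ε hε
    obtain ⟨a, ha, halt⟩ := exists_lt_of_csInf_lt hRne (lt_add_of_pos_right q hε)
    obtain ⟨y, hy, rfl⟩ := ha
    exact ⟨y, hy, halt⟩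
  · intro ε hε
    obtain ⟨a, ha, halt⟩ := exists_lt_of_lt_csSup hLne (sub_lt_self p hε)
    obtain ⟨y, hy, rfl⟩ := ha
    exact ⟨y, hy, halt⟩


lemma exists_box_preimage {n : ℕ}
    (M : Matrix (Fin n) (Fin n) ℝ)
    (lo hi : Fin n → ℝ) (hlh : ∀ i, lo i ≤ hi i) (wv : Fin n → ℝ)
    (hsep : ∀ u : Fin n → ℝ, ∃ μ : Fin n → ℝ,
      (∀ i, μ i ∈ Set.Icc (lo i) (hi i)) ∧ wv ⬝ᵥ u ≤ M.mulVec μ ⬝ᵥ u) :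
    ∃ μ : Fin n → ℝ, (∀ i, μ i ∈ Set.Icc (lo i) (hi i)) ∧ M.mulVec μ = wv := by
  classical
  set S : Set (Fin n → ℝ) := Set.univ.pi fun i => Set.Icc (lo i) (hi i) with hS
  set T : Set (Fin n → ℝ) := M.mulVec '' S with hT
  by_contra hcon
  push_neg at hcon
  have hwT : wv ∉ T := by
    rintro ⟨μ, hμ, hμw⟩
    exact hcon μ (fun i => hμ i (Set.mem_univ i)) hμw
  have hlin : IsLinearMap ℝ (M.mulVec) :=
    ⟨fun x y => M.mulVec_add x y, fun c x => M.mulVec_smul c x⟩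
  have hTconv : Convex ℝ T :=
    (convex_pi fun i _ => convex_Icc _ _).is_linear_image hlin
  have hScomp : IsCompact S := isCompact_univ_pi fun i => isCompact_Icc
  have hcont : Continuous (M.mulVec) := by
    have : (M.mulVec) = fun x => M.mulVecLin x := by
      funext x; rfl
    rw [this]
    exact M.mulVecLin.continuous_of_finiteDimensional
  have hTcomp : IsCompact T := hScomp.image hcont
  obtain ⟨φ, c, hφT, hφw⟩ := geometric_hahn_banach_closed_point hTconv hTcomp.isClosed hwT
  set u : Fin n → ℝ := fun i => φ ((Pi.single i 1 : Fin n → ℝ)) with hu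
  have hφx : ∀ x : Fin n → ℝ, φ x = x ⬝ᵥ u := by
    intro x
    have hx : x = ∑ i, x i • ((Pi.single i 1 : Fin n → ℝ)) := by
      funext k
      simp [Finset.sum_apply, Pi.single_apply, Finset.sum_ite_eq', Finset.mem_univ]
    conv_lhs => rw [hx]
    rw [map_sum]
    simp only [φ.map_smul, smul_eq_mul]
    rfl
  obtain ⟨μ, hμbox, hμineq⟩ := hsep u
  have hμT : M.mulVec μ ∈ T := ⟨μ, fun i _ => hμbox i, rfl⟩
  have h1 := hφT _ hμT
  rw [hφx] at h1
  rw [hφx] at hφw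
  linarith



open Matrix

lemma exists_small_step (φ0 φ2 : ℝ → ℝ) (d0 v c0 μv p q δ : ℝ) (hδpos : 0 < δ)
    (hφ2 : ConvexOn ℝ Set.univ φ2) (hder : HasDerivAt φ0 c0 d0)
    (hqap : ∀ ε, 0 < ε → ∃ y, d0 < y ∧ slope φ2 d0 y < q + ε)
    (hpap : ∀ ε, 0 < ε → ∃ y, y < d0 ∧ p - ε < slope φ2 d0 y)
    (hμpos : 0 < v → μv = c0 + q) (hμneg : v < 0 → μv = c0 + p) :
    ∃ ti, 0 < ti ∧ ∀ t, 0 < t → t ≤ ti →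
      (φ0 (d0 + t * v) + φ2 (d0 + t * v)) - (φ0 d0 + φ2 d0) ≤ t * (v * μv + δ) := by
  rcases lt_trichotomy v 0 with hv | hv | hv
  · -- v < 0
    rw [hμneg hv]
    set δ' : ℝ := δ / (2 * (-v)) with hδ'
    have hδ'pos : 0 < δ' := div_pos hδpos (by linarith)
    obtain ⟨y, hy, hygt⟩ := hpap δ' hδ'pos
    have htend : Filter.Tendsto (slope φ0 d0) (nhdsWithin d0 (Set.Iio d0)) (nhds c0) := by
      refine (hasDerivAt_iff_tendsto_slope.mp hder).mono_left (nhdsWithin_mono _ ?_)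
      intro x hx
      exact ne_of_lt hx
    have hev := htend.eventually_const_lt (sub_lt_self _ hδ'pos)
    obtain ⟨r, hr, hsub⟩ := mem_nhdsLT_iff_exists_Ioo_subset.mp hev
    refine ⟨min ((y - d0) / v) ((r - d0) / (2 * v)), ?_, ?_⟩
    · apply lt_min
      · rw [← neg_div_neg_eq]
        apply div_pos <;> linarith
      · rw [← neg_div_neg_eq]
        apply div_pos <;> linarith [mem_Iio.mp hr]
    intro t ht htle
    have htv : t * v < 0 := mul_neg_of_pos_of_neg ht hv
    have hx1 : d0 + t * v < d0 := by linarith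
    have hgey : y ≤ d0 + t * v := by
      have h := le_trans htle (min_le_left _ _)
      have h2 : ((y - d0) / v) * v ≤ t * v := mul_le_mul_of_nonpos_right h hv.le
      rw [div_mul_cancel₀ _ (ne_of_lt hv)] at h2
      linarith
    have hgtr : r < d0 + t * v := by
      have h := le_trans htle (min_le_right _ _)
      have h2 : ((r - d0) / (2 * v)) * (2 * v) ≤ t * (2 * v) :=
        mul_le_mul_of_nonpos_right h (by linarith)
      rw [div_mul_cancel₀ _ (by intro hc; nlinarith : 2 * v ≠ 0)] at h2
      have hrd : r - d0 < 0 := by linarith [mem_Iio.mp hr]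
      nlinarith
    have hs2 : slope φ2 d0 y ≤ slope φ2 d0 (d0 + t * v) :=
      hφ2.slope_mono (Set.mem_univ d0) ⟨Set.mem_univ _, ne_of_lt hy⟩
        ⟨Set.mem_univ _, ne_of_lt hx1⟩ hgey
    have hs2' : p - δ' < slope φ2 d0 (d0 + t * v) := lt_of_lt_of_le hygt hs2
    have hs0' : c0 - δ' < slope φ0 d0 (d0 + t * v) := hsub ⟨hgtr, hx1⟩
    have hf2v : slope φ2 d0 (d0 + t * v) * (t * v) = φ2 (d0 + t * v) - φ2 d0 := by
      rw [slope_def_field, show d0 + t * v - d0 = t * v from by ring]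
      exact div_mul_cancel₀ _ (ne_of_lt htv)
    have hf0v : slope φ0 d0 (d0 + t * v) * (t * v) = φ0 (d0 + t * v) - φ0 d0 := by
      rw [slope_def_field, show d0 + t * v - d0 = t * v from by ring]
      exact div_mul_cancel₀ _ (ne_of_lt htv)
    have hb0 := mul_le_mul_of_nonpos_right hs0'.le htv.le
    have hb2 := mul_le_mul_of_nonpos_right hs2'.le htv.le
    rw [hf0v] at hb0
    rw [hf2v] at hb2
    have h2δ : δ' * (2 * (-v)) = δ := div_mul_cancel₀ _ (by linarith)
    nlinarith [hb0, hb2]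
  · -- v = 0
    refine ⟨1, one_pos, fun t ht _ => ?_⟩
    rw [hv]
    simp only [mul_zero, add_zero, zero_mul, zero_add, sub_self]
    positivity
  · -- v > 0
    rw [hμpos hv]
    set δ' : ℝ := δ / (2 * v) with hδ'
    have hδ'pos : 0 < δ' := div_pos hδpos (by linarith)
    obtain ⟨y, hy, hylt⟩ := hqap δ' hδ'pos
    have htend : Filter.Tendsto (slope φ0 d0) (nhdsWithin d0 (Set.Ioi d0)) (nhds c0) := by
      refine (hasDerivAt_iff_tendsto_slope.mp hder).mono_left (nhdsWithin_mono _ ?_)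
      intro x hx
      exact ne_of_gt hx
    have hev := htend.eventually_lt_const (lt_add_of_pos_right _ hδ'pos)
    obtain ⟨r, hr, hsub⟩ := mem_nhdsGT_iff_exists_Ioo_subset.mp hev
    refine ⟨min ((y - d0) / v) ((r - d0) / (2 * v)), ?_, ?_⟩
    · apply lt_min
      · apply div_pos <;> linarith
      · apply div_pos
        · linarith [mem_Ioi.mp hr]
        · linarith
    intro t ht htle
    have htv : 0 < t * v := mul_pos ht hv
    have hx1 : d0 < d0 + t * v := by linarith
    have hley : d0 + t * v ≤ y := by
      have h := le_trans htle (min_le_left _ _)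
      have h2 : t * v ≤ ((y - d0) / v) * v := mul_le_mul_of_nonneg_right h hv.le
      rw [div_mul_cancel₀ _ (ne_of_gt hv)] at h2
      linarith
    have hltr : d0 + t * v < r := by
      have h := le_trans htle (min_le_right _ _)
      have h2 : t * (2 * v) ≤ ((r - d0) / (2 * v)) * (2 * v) :=
        mul_le_mul_of_nonneg_right h (by linarith)
      rw [div_mul_cancel₀ _ (by positivity : 2 * v ≠ 0)] at h2
      have hrd : d0 < r := mem_Ioi.mp hr
      nlinarith
    have hs2 : slope φ2 d0 (d0 + t * v) ≤ slope φ2 d0 y :=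
      hφ2.slope_mono (Set.mem_univ d0) ⟨Set.mem_univ _, ne_of_gt hx1⟩
        ⟨Set.mem_univ _, ne_of_gt hy⟩ hley
    have hs2' : slope φ2 d0 (d0 + t * v) < q + δ' := lt_of_le_of_lt hs2 hylt
    have hs0' : slope φ0 d0 (d0 + t * v) < c0 + δ' := hsub ⟨hx1, hltr⟩
    have hf2v : slope φ2 d0 (d0 + t * v) * (t * v) = φ2 (d0 + t * v) - φ2 d0 := by
      rw [slope_def_field, show d0 + t * v - d0 = t * v from by ring]
      exact div_mul_cancel₀ _ (ne_of_gt htv)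
    have hf0v : slope φ0 d0 (d0 + t * v) * (t * v) = φ0 (d0 + t * v) - φ0 d0 := by
      rw [slope_def_field, show d0 + t * v - d0 = t * v from by ring]
      exact div_mul_cancel₀ _ (ne_of_gt htv)
    have hb0 := mul_le_mul_of_nonneg_right hs0'.le htv.le
    have hb2 := mul_le_mul_of_nonneg_right hs2'.le htv.le
    rw [hf0v] at hb0
    rw [hf2v] at hb2
    have h2δ : δ' * (2 * v) = δ := div_mul_cancel₀ _ (by positivity)
    nlinarith [hb0, hb2]

set_option maxHeartbeats 1000000 in
/-- Under Slater's condition, an optimal solution of the ROLC problem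
admits multipliers `(λ, μ, ν⁻, ν⁺)` satisfying the KKT conditions. -/
theorem optimal_implies_kkt
    {n l : ℕ} (hn : 0 < n) (hl : 0 < l)
    (C : Matrix (Fin n) (Fin l) ℝ)
    (hC1 : Matrix.vecMul (fun _ => (1:ℝ)) C = 0)
    (hker : ∀ x : Fin n → ℝ, Cᵀ.mulVec x = 0 ↔ ∃ c : ℝ, x = fun _ => c)
    (B : Matrix (Fin l) (Fin l) ℝ)
    (hBdiag : ∀ e f, e ≠ f → B e f = 0) (hBpos : ∀ e, 0 < B e e)
    (D : Matrix (Fin n) (Fin n) ℝ)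
    (hDdiag : ∀ i j, i ≠ j → D i j = 0) (hDpos : ∀ i, 0 < D i i)
    (Pin : Fin n → ℝ)
    (dlo dhi : Fin n → ℝ) (hbox : ∀ i, dlo i ≤ dhi i)
    (f0 : Fin n → ℝ → ℝ) (hf0diff : ∀ i, Differentiable ℝ (f0 i))
    (β : ℝ) (hβ : 1 < β)
    (hf0sc : ∀ (i : Fin n) (x y : ℝ),
      f0 i x + deriv (f0 i) x * (y - x) + β / 2 * (y - x) ^ 2 ≤ f0 i y)
    (f2 : Fin n → ℝ → ℝ) (hf2conv : ∀ i, ConvexOn ℝ Set.univ (f2 i))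
    (Plo Phi : Fin l → ℝ)
    -- Slater's condition
    (hslater : ∃ (dt θt : Fin n → ℝ),
      (∀ i, dlo i < dt i ∧ dt i < dhi i) ∧
      Pin - dt - (C * B * Cᵀ).mulVec θt = 0 ∧
      (∀ e, Plo e < B.mulVec (Cᵀ.mulVec θt) e ∧ B.mulVec (Cᵀ.mulVec θt) e < Phi e))
    -- the optimal point
    (d θh ω : Fin n → ℝ) (P : Fin l → ℝ)
    -- feasibility of (d, θ̂, ω, P)
    (hfeas_box : ∀ i, d i ∈ Set.Icc (dlo i) (dhi i))
    (hfeas1 : Pin - d - D.mulVec ω - C.mulVec P = 0)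
    (hfeas2 : Pin - d - (C * B * Cᵀ).mulVec θh = 0)
    (hfeas3 : ∀ e, Plo e ≤ B.mulVec (Cᵀ.mulVec θh) e ∧ B.mulVec (Cᵀ.mulVec θh) e ≤ Phi e)
    -- optimality of (d, θ̂, ω, P)
    (hopt : ∀ (d' θh' ω' : Fin n → ℝ) (P' : Fin l → ℝ),
      (∀ i, d' i ∈ Set.Icc (dlo i) (dhi i)) →
      Pin - d' - D.mulVec ω' - C.mulVec P' = 0 →
      Pin - d' - (C * B * Cᵀ).mulVec θh' = 0 →
      (∀ e, Plo e ≤ B.mulVec (Cᵀ.mulVec θh') e ∧ B.mulVec (Cᵀ.mulVec θh') e ≤ Phi e) →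
      (∑ i, (f0 i (d i) + f2 i (d i))) + (1 / 2) * (ω ⬝ᵥ D.mulVec ω) ≤
        (∑ i, (f0 i (d' i) + f2 i (d' i))) + (1 / 2) * (ω' ⬝ᵥ D.mulVec ω')) :
    -- existence of KKT multipliers
    ∃ (lam μ : Fin n → ℝ) (νm νp : Fin l → ℝ),
      (∀ i, ∃ s z : ℝ,
        (∀ y : ℝ, f2 i (d i) + s * (y - d i) ≤ f2 i y) ∧
        (∀ y ∈ Set.Icc (dlo i) (dhi i), z * (y - d i) ≤ 0) ∧
        lam i + μ i = deriv (f0 i) (d i) + s + z) ∧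
      ω = lam ∧
      (C * B).mulVec (νm - νp) + (C * B * Cᵀ).mulVec μ = 0 ∧
      Cᵀ.mulVec lam = 0 ∧
      Pin - d - D.mulVec ω - C.mulVec P = 0 ∧
      Pin - d - (C * B * Cᵀ).mulVec θh = 0 ∧
      (∀ e, 0 ≤ νm e ∧ Plo e ≤ B.mulVec (Cᵀ.mulVec θh) e ∧
        νm e * (Plo e - B.mulVec (Cᵀ.mulVec θh) e) = 0) ∧
      (∀ e, 0 ≤ νp e ∧ B.mulVec (Cᵀ.mulVec θh) e ≤ Phi e ∧
        νp e * (B.mulVec (Cᵀ.mulVec θh) e - Phi e) = 0) := by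
  classical
  haveI : Nonempty (Fin n) := ⟨⟨0, hn⟩⟩
  -- B and M are symmetric
  have hBsymm : Bᵀ = B := by
    ext e f
    rcases eq_or_ne e f with h | h
    · rw [h]; rfl
    · rw [Matrix.transpose_apply, hBdiag f e (Ne.symm h), hBdiag e f h]
  set M : Matrix (Fin n) (Fin n) ℝ := C * B * Cᵀ with hM
  have hMsymm : Mᵀ = M := by
    rw [hM, Matrix.transpose_mul, Matrix.transpose_mul, Matrix.transpose_transpose, hBsymm,
      ← Matrix.mul_assoc]
  have hMLf : ∀ θ : Fin n → ℝ, M.mulVec θ = C.mulVec (B.mulVec (Cᵀ.mulVec θ)) := by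
    intro θ
    rw [Matrix.mulVec_mulVec, Matrix.mulVec_mulVec, hM]
  -- pointwise version of hfeas2
  have hddθh : ∀ i, Pin i - M.mulVec θh i = d i := by
    intro i
    have h := congrFun hfeas2 i
    simp only [Pi.sub_apply, Pi.zero_apply] at h
    linarith
  -- Step 0 : ω = 0
  have hP0feas : Pin - d - D.mulVec 0 - C.mulVec (B.mulVec (Cᵀ.mulVec θh)) = 0 := by
    rw [Matrix.mulVec_zero, ← hMLf θh]
    simpa using hfeas2
  have hωzero : ω = 0 := by
    have h := hopt d θh 0 (B.mulVec (Cᵀ.mulVec θh)) hfeas_box hP0feas hfeas2 hfeas3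
    rw [Matrix.mulVec_zero, zero_dotProduct] at h
    have hq : ω ⬝ᵥ D.mulVec ω ≤ 0 := by linarith
    have hquad : ω ⬝ᵥ D.mulVec ω = ∑ i, D i i * ω i ^ 2 := by
      simp only [dotProduct, Matrix.mulVec]
      refine Finset.sum_congr rfl fun i _ => ?_
      have hin : (∑ j, D i j * ω j) = D i i * ω i := by
        rw [Finset.sum_eq_single i]
        · intro j _ hji
          rw [hDdiag i j (Ne.symm hji), zero_mul]
        · intro h'
          exact absurd (Finset.mem_univ i) h'
      rw [hin]; ring
    have hterm : ∀ i ∈ Finset.univ, (0:ℝ) ≤ D i i * ω i ^ 2 :=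
      fun i _ => mul_nonneg (hDpos i).le (sq_nonneg _)
    have hsum0 : ∑ i, D i i * ω i ^ 2 = 0 :=
      le_antisymm (by rw [← hquad]; exact hq) (Finset.sum_nonneg hterm)
    funext i
    have hi0 := (Finset.sum_eq_zero_iff_of_nonneg hterm).mp hsum0 i (Finset.mem_univ i)
    have hω2 : ω i ^ 2 = 0 := by
      rcases mul_eq_zero.mp hi0 with h' | h'
      · exact absurd h' (ne_of_gt (hDpos i))
      · exact h'
    exact pow_eq_zero_iff (two_ne_zero) |>.mp hω2
  -- the reduced convex program in θ
  set dd : (Fin n → ℝ) → (Fin n → ℝ) := fun θ => Pin - M.mulVec θ with hdd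
  have hddθh' : dd θh = d := funext fun i => hddθh i
  set g : ((Fin n ⊕ Fin n) ⊕ (Fin l ⊕ Fin l)) → (Fin n → ℝ) → ℝ :=
    Sum.elim (Sum.elim (fun i θ => dlo i - dd θ i) (fun i θ => dd θ i - dhi i))
      (Sum.elim (fun e θ => Plo e - B.mulVec (Cᵀ.mulVec θ) e)
        (fun e θ => B.mulVec (Cᵀ.mulVec θ) e - Phi e)) with hg
  set H : (Fin n → ℝ) → ℝ := fun θ => ∑ i, (f0 i (dd θ i) + f2 i (dd θ i)) with hH
  -- affinity of dd and line flows
  have hddaff : ∀ (x y : Fin n → ℝ) (a b : ℝ), a + b = 1 → ∀ i,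
      dd (a • x + b • y) i = a * dd x i + b * dd y i := by
    intro x y a b hab i
    have h1 : M.mulVec (a • x + b • y) = a • M.mulVec x + b • M.mulVec y := by
      rw [Matrix.mulVec_add, Matrix.mulVec_smul, Matrix.mulVec_smul]
    show Pin i - M.mulVec (a • x + b • y) i = a * (Pin i - M.mulVec x i) + b * (Pin i - M.mulVec y i)
    rw [h1]
    simp only [Pi.add_apply, Pi.smul_apply, smul_eq_mul]
    linear_combination (-(Pin i)) * hab
  have hLfpt : ∀ (x y : Fin n → ℝ) (a b : ℝ) (e : Fin l),
      B.mulVec (Cᵀ.mulVec (a • x + b • y)) e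
        = a * B.mulVec (Cᵀ.mulVec x) e + b * B.mulVec (Cᵀ.mulVec y) e := by
    intro x y a b e
    have h1 : Cᵀ.mulVec (a • x + b • y) = a • Cᵀ.mulVec x + b • Cᵀ.mulVec y := by
      rw [Matrix.mulVec_add, Matrix.mulVec_smul, Matrix.mulVec_smul]
    rw [h1, Matrix.mulVec_add, Matrix.mulVec_smul, Matrix.mulVec_smul]
    simp [Pi.add_apply, Pi.smul_apply, smul_eq_mul]
  have hgaff : ∀ j (x y : Fin n → ℝ) (a b : ℝ), 0 ≤ a → 0 ≤ b → a + b = 1 →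
      g j (a • x + b • y) ≤ a * g j x + b * g j y := by
    rintro ((i | i) | (e | e)) x y a b ha hb hab
    · show dlo i - dd (a • x + b • y) i ≤ a * (dlo i - dd x i) + b * (dlo i - dd y i)
      rw [hddaff x y a b hab i]
      apply le_of_eq
      linear_combination (-(dlo i)) * hab
    · show dd (a • x + b • y) i - dhi i ≤ a * (dd x i - dhi i) + b * (dd y i - dhi i)
      rw [hddaff x y a b hab i]
      apply le_of_eq
      linear_combination (dhi i) * hab
    · show Plo e - B.mulVec (Cᵀ.mulVec (a • x + b • y)) e
        ≤ a * (Plo e - B.mulVec (Cᵀ.mulVec x) e) + b * (Plo e - B.mulVec (Cᵀ.mulVec y) e)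
      rw [hLfpt x y a b e]
      apply le_of_eq
      linear_combination (-(Plo e)) * hab
    · show B.mulVec (Cᵀ.mulVec (a • x + b • y)) e - Phi e
        ≤ a * (B.mulVec (Cᵀ.mulVec x) e - Phi e) + b * (B.mulVec (Cᵀ.mulVec y) e - Phi e)
      rw [hLfpt x y a b e]
      apply le_of_eq
      linear_combination (Phi e) * hab
  -- convexity of the objective
  have hf0cvx : ∀ i (x' y' a b : ℝ), 0 ≤ a → 0 ≤ b → a + b = 1 →
      f0 i (a * x' + b * y') ≤ a * f0 i x' + b * f0 i y' := by
    intro i x' y' a b ha hb hab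
    set m := a * x' + b * y' with hm
    have h1 := mul_le_mul_of_nonneg_left (hf0sc i m x') ha
    have h2 := mul_le_mul_of_nonneg_left (hf0sc i m y') hb
    rw [mul_add, mul_add] at h1 h2
    have hx : a * (deriv (f0 i) m * (x' - m)) + b * (deriv (f0 i) m * (y' - m)) = 0 := by
      rw [hm]
      linear_combination (-(deriv (f0 i) m * (a * x' + b * y'))) * hab
    have hs1 : 0 ≤ a * (β / 2 * (x' - m) ^ 2) :=
      mul_nonneg ha (mul_nonneg (by linarith) (sq_nonneg _))
    have hs2 : 0 ≤ b * (β / 2 * (y' - m) ^ 2) :=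
      mul_nonneg hb (mul_nonneg (by linarith) (sq_nonneg _))
    have hfm : a * f0 i m + b * f0 i m = f0 i m := by rw [← add_mul, hab, one_mul]
    clear_value m
    linarith only [h1, h2, hx, hs1, hs2, hfm]
  have hf2cvx : ∀ i (x' y' a b : ℝ), 0 ≤ a → 0 ≤ b → a + b = 1 →
      f2 i (a * x' + b * y') ≤ a * f2 i x' + b * f2 i y' := by
    intro i x' y' a b ha hb hab
    have h := (hf2conv i).2 (Set.mem_univ x') (Set.mem_univ y') ha hb hab
    simpa [smul_eq_mul] using h
  have hHcvx : ∀ (x y : Fin n → ℝ) (a b : ℝ), 0 ≤ a → 0 ≤ b → a + b = 1 →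
      H (a • x + b • y) ≤ a * H x + b * H y := by
    intro x y a b ha hb hab
    have h1 : H (a • x + b • y)
        = ∑ i, (f0 i (a * dd x i + b * dd y i) + f2 i (a * dd x i + b * dd y i)) := by
      refine Finset.sum_congr rfl fun i _ => ?_
      rw [hddaff x y a b hab i]
    have h2 : ∀ i ∈ Finset.univ,
        f0 i (a * dd x i + b * dd y i) + f2 i (a * dd x i + b * dd y i)
          ≤ a * (f0 i (dd x i) + f2 i (dd x i)) + b * (f0 i (dd y i) + f2 i (dd y i)) := by
      intro i _
      have ha1 := hf0cvx i (dd x i) (dd y i) a b ha hb hab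
      have ha2 := hf2cvx i (dd x i) (dd y i) a b ha hb hab
      linarith
    refine le_trans (le_of_eq h1) (le_trans (Finset.sum_le_sum h2) (le_of_eq ?_))
    rw [Finset.sum_add_distrib, ← Finset.mul_sum, ← Finset.mul_sum]
  -- feasibility of θh for the reduced program
  have hgθh : ∀ j, g j θh ≤ 0 := by
    rintro ((i | i) | (e | e))
    · show dlo i - dd θh i ≤ 0
      rw [hddθh']
      linarith [(hfeas_box i).1]
    · show dd θh i - dhi i ≤ 0
      rw [hddθh']
      linarith [(hfeas_box i).2]
    · show Plo e - B.mulVec (Cᵀ.mulVec θh) e ≤ 0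
      linarith [(hfeas3 e).1]
    · show B.mulVec (Cᵀ.mulVec θh) e - Phi e ≤ 0
      linarith [(hfeas3 e).2]
  -- Slater point for the reduced program
  obtain ⟨dt, θt, hdtbox, hdteq, hdtline⟩ := hslater
  have hddθt : dd θt = dt := by
    funext i
    have h := congrFun hdteq i
    simp only [Pi.sub_apply, Pi.zero_apply] at h
    show Pin i - M.mulVec θt i = dt i
    linarith
  have hgθt : ∀ j, g j θt < 0 := by
    rintro ((i | i) | (e | e))
    · show dlo i - dd θt i < 0
      rw [hddθt]
      linarith [(hdtbox i).1]
    · show dd θt i - dhi i < 0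
      rw [hddθt]
      linarith [(hdtbox i).2]
    · show Plo e - B.mulVec (Cᵀ.mulVec θt) e < 0
      linarith [(hdtline e).1]
    · show B.mulVec (Cᵀ.mulVec θt) e - Phi e < 0
      linarith [(hdtline e).2]
  -- optimality of θh for the reduced program
  have hred : ∀ θ, (∀ j, g j θ ≤ 0) → H θh ≤ H θ := by
    intro θ hθ
    have hbox' : ∀ i, dd θ i ∈ Set.Icc (dlo i) (dhi i) := by
      intro i
      have h1 : dlo i - dd θ i ≤ 0 := hθ (Sum.inl (Sum.inl i))
      have h2 : dd θ i - dhi i ≤ 0 := hθ (Sum.inl (Sum.inr i))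
      exact ⟨by linarith, by linarith⟩
    have hc2 : Pin - dd θ - M.mulVec θ = 0 := by
      funext i
      show Pin i - (Pin i - M.mulVec θ i) - M.mulVec θ i = 0
      ring
    have hc1 : Pin - dd θ - D.mulVec 0 - C.mulVec (B.mulVec (Cᵀ.mulVec θ)) = 0 := by
      rw [Matrix.mulVec_zero, ← hMLf θ]
      funext i
      show Pin i - (Pin i - M.mulVec θ i) - 0 - M.mulVec θ i = 0
      ring
    have hc3 : ∀ e, Plo e ≤ B.mulVec (Cᵀ.mulVec θ) e ∧ B.mulVec (Cᵀ.mulVec θ) e ≤ Phi e := by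
      intro e
      have h1 : Plo e - B.mulVec (Cᵀ.mulVec θ) e ≤ 0 := hθ (Sum.inr (Sum.inl e))
      have h2 : B.mulVec (Cᵀ.mulVec θ) e - Phi e ≤ 0 := hθ (Sum.inr (Sum.inr e))
      exact ⟨by linarith, by linarith⟩
    have h := hopt (dd θ) θ 0 (B.mulVec (Cᵀ.mulVec θ)) hbox' hc1 hc2 hc3
    rw [hωzero, Matrix.mulVec_zero, zero_dotProduct] at h
    show (∑ i, (f0 i (dd θh i) + f2 i (dd θh i))) ≤ ∑ i, (f0 i (dd θ i) + f2 i (dd θ i))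
    rw [hddθh']
    linarith
  -- Lagrange multipliers
  obtain ⟨ν, hνnn, hνcomp, hνineq⟩ :=
    lagrange_multipliers H g hHcvx hgaff θt hgθt θh hgθh hred
  set aa : Fin n → ℝ := fun i => ν (Sum.inl (Sum.inl i)) with haa
  set bb : Fin n → ℝ := fun i => ν (Sum.inl (Sum.inr i)) with hbb
  set νm : Fin l → ℝ := fun e => ν (Sum.inr (Sum.inl e)) with hνm
  set νp : Fin l → ℝ := fun e => ν (Sum.inr (Sum.inr e)) with hνp
  set z : Fin n → ℝ := fun i => bb i - aa i with hz
  set wv : Fin n → ℝ := (C * B).mulVec (fun e => νp e - νm e) - M.mulVec z with hwv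
  -- expansion of the multiplier sum
  have hSg : ∀ θ, (∑ j, ν j * g j θ)
      = ((∑ i, z i * dd θ i) + (∑ e, (νp e - νm e) * B.mulVec (Cᵀ.mulVec θ) e))
        + (((∑ i, aa i * dlo i) - (∑ i, bb i * dhi i))
           + ((∑ e, νm e * Plo e) - (∑ e, νp e * Phi e))) := by
    intro θ
    simp only [Fintype.sum_sum_type]
    have hL1 : (∑ i, ν (Sum.inl (Sum.inl i)) * g (Sum.inl (Sum.inl i)) θ)
        + (∑ i, ν (Sum.inl (Sum.inr i)) * g (Sum.inl (Sum.inr i)) θ)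
        = (∑ i, z i * dd θ i) + ((∑ i, aa i * dlo i) - (∑ i, bb i * dhi i)) := by
      rw [← Finset.sum_add_distrib]
      have hterm : ∀ i ∈ Finset.univ,
          ν (Sum.inl (Sum.inl i)) * g (Sum.inl (Sum.inl i)) θ
            + ν (Sum.inl (Sum.inr i)) * g (Sum.inl (Sum.inr i)) θ
          = z i * dd θ i + (aa i * dlo i - bb i * dhi i) := by
        intro i _
        show ν (Sum.inl (Sum.inl i)) * (dlo i - dd θ i)
            + ν (Sum.inl (Sum.inr i)) * (dd θ i - dhi i)
          = z i * dd θ i + (aa i * dlo i - bb i * dhi i)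
        simp only [hz, hbb, haa]
        ring
      rw [Finset.sum_congr rfl hterm, Finset.sum_add_distrib, Finset.sum_sub_distrib]
    have hL2 : (∑ e, ν (Sum.inr (Sum.inl e)) * g (Sum.inr (Sum.inl e)) θ)
        + (∑ e, ν (Sum.inr (Sum.inr e)) * g (Sum.inr (Sum.inr e)) θ)
        = (∑ e, (νp e - νm e) * B.mulVec (Cᵀ.mulVec θ) e)
          + ((∑ e, νm e * Plo e) - (∑ e, νp e * Phi e)) := by
      rw [← Finset.sum_add_distrib]
      have hterm : ∀ e ∈ Finset.univ,
          ν (Sum.inr (Sum.inl e)) * g (Sum.inr (Sum.inl e)) θ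
            + ν (Sum.inr (Sum.inr e)) * g (Sum.inr (Sum.inr e)) θ
          = (νp e - νm e) * B.mulVec (Cᵀ.mulVec θ) e + (νm e * Plo e - νp e * Phi e) := by
        intro e _
        show ν (Sum.inr (Sum.inl e)) * (Plo e - B.mulVec (Cᵀ.mulVec θ) e)
            + ν (Sum.inr (Sum.inr e)) * (B.mulVec (Cᵀ.mulVec θ) e - Phi e)
          = (νp e - νm e) * B.mulVec (Cᵀ.mulVec θ) e + (νm e * Plo e - νp e * Phi e)
        simp only [hνp, hνm]
        ring
      rw [Finset.sum_congr rfl hterm, Finset.sum_add_distrib, Finset.sum_sub_distrib]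
    rw [hL1, hL2]
    ring
  -- the linear part of the Lagrangian
  have hlin : ∀ θ, (∑ i, z i * dd θ i) + (∑ e, (νp e - νm e) * B.mulVec (Cᵀ.mulVec θ) e)
      = wv ⬝ᵥ θ + z ⬝ᵥ Pin := by
    intro θ
    have e1 : (∑ i, z i * dd θ i) = z ⬝ᵥ Pin - z ⬝ᵥ M.mulVec θ := by
      simp only [dotProduct]
      rw [← Finset.sum_sub_distrib]
      refine Finset.sum_congr rfl fun i _ => ?_
      show z i * (Pin i - M.mulVec θ i) = z i * Pin i - z i * M.mulVec θ i
      ring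
    have e2 : z ⬝ᵥ M.mulVec θ = M.mulVec z ⬝ᵥ θ := by
      rw [Matrix.dotProduct_mulVec, ← Matrix.mulVec_transpose, hMsymm]
    have e3 : (∑ e, (νp e - νm e) * B.mulVec (Cᵀ.mulVec θ) e)
        = (C * B).mulVec (fun e => νp e - νm e) ⬝ᵥ θ := by
      have h0 : (∑ e, (νp e - νm e) * B.mulVec (Cᵀ.mulVec θ) e)
          = (fun e => νp e - νm e) ⬝ᵥ (B.mulVec (Cᵀ.mulVec θ)) := rfl
      rw [h0, Matrix.mulVec_mulVec, Matrix.dotProduct_mulVec, ← Matrix.mulVec_transpose]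
      congr 1
      rw [Matrix.transpose_mul, Matrix.transpose_transpose, hBsymm]
    have e4 : wv ⬝ᵥ θ = (C * B).mulVec (fun e => νp e - νm e) ⬝ᵥ θ - M.mulVec z ⬝ᵥ θ := by
      rw [hwv]
      exact sub_dotProduct _ _ _
    rw [e1, e2, e3, e4]
    ring
  -- stationarity inequality
  have hfull : ∀ θ, H θ + (∑ j, ν j * g j θ)
      = (∑ i, (f0 i (dd θ i) + f2 i (dd θ i))) + wv ⬝ᵥ θ
        + (z ⬝ᵥ Pin + (((∑ i, aa i * dlo i) - (∑ i, bb i * dhi i))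
           + ((∑ e, νm e * Plo e) - (∑ e, νp e * Phi e)))) := by
    intro θ
    rw [hSg θ]
    simp only [hH]
    rw [hlin θ]
    ring
  have hstat : ∀ θ, (∑ i, (f0 i (d i) + f2 i (d i))) + wv ⬝ᵥ θh
      ≤ (∑ i, (f0 i (dd θ i) + f2 i (dd θ i))) + wv ⬝ᵥ θ := by
    intro θ
    have h1 := hνineq θ
    have h2 : (∑ j, ν j * g j θh) = 0 := Finset.sum_eq_zero fun j _ => hνcomp j
    have h5 := hfull θ
    have h6 := hfull θh
    rw [hddθh'] at h6
    linarith only [h1, h2, h5, h6]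
  -- subgradients of f2
  have hsubd := fun i => subdiff_interval (f2 i) (hf2conv i) (d i)
  choose p q hpq hsg hqap hpap hqle hple using hsubd
  set lo : Fin n → ℝ := fun i => deriv (f0 i) (d i) + p i with hlo
  set hi : Fin n → ℝ := fun i => deriv (f0 i) (d i) + q i with hhi
  -- the separation hypothesis for exists_box_preimage
  have hsep : ∀ u : Fin n → ℝ, ∃ μ0 : Fin n → ℝ,
      (∀ i, μ0 i ∈ Set.Icc (lo i) (hi i)) ∧ wv ⬝ᵥ u ≤ M.mulVec μ0 ⬝ᵥ u := by
    intro u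
    set v : Fin n → ℝ := M.mulVec u with hv
    set μs : Fin n → ℝ := fun i => if 0 ≤ v i then hi i else lo i with hμs
    have hbox : ∀ i, μs i ∈ Set.Icc (lo i) (hi i) := by
      intro i
      have hlohi : lo i ≤ hi i := by
        show deriv (f0 i) (d i) + p i ≤ deriv (f0 i) (d i) + q i
        linarith [hpq i]
      rcases le_or_gt 0 (v i) with h | h
      · have hval : μs i = hi i := by simp only [hμs]; rw [if_pos h]
        rw [hval]
        exact ⟨hlohi, le_refl _⟩
      · have hval : μs i = lo i := by simp only [hμs]; rw [if_neg (not_le.mpr h)]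
        rw [hval]
        exact ⟨le_refl _, hlohi⟩
    refine ⟨μs, hbox, ?_⟩
    have hMμu : M.mulVec μs ⬝ᵥ u = ∑ i, v i * μs i := by
      rw [dotProduct_comm, Matrix.dotProduct_mulVec, ← Matrix.mulVec_transpose, hMsymm]
      rfl
    rw [hMμu]
    apply le_of_forall_pos_le_add
    intro ε hε
    set δ : ℝ := ε / ((n : ℝ) + 1) with hδ
    have hδpos : 0 < δ := by
      apply div_pos hε
      positivity
    have hti : ∀ i : Fin n, ∃ ti : ℝ, 0 < ti ∧ ∀ t, 0 < t → t ≤ ti →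
        (f0 i (d i + t * v i) + f2 i (d i + t * v i)) - (f0 i (d i) + f2 i (d i))
          ≤ t * (v i * μs i + δ) := by
      intro i
      refine exists_small_step (f0 i) (f2 i) (d i) (v i) (deriv (f0 i) (d i)) (μs i)
        (p i) (q i) δ hδpos (hf2conv i) (((hf0diff i) (d i)).hasDerivAt)
        (hqap i) (hpap i) ?_ ?_
      · intro hv'
        simp only [hμs]
        rw [if_pos hv'.le]
      · intro hv'
        simp only [hμs]
        rw [if_neg (not_le.mpr hv')]
    choose ti hti0 htib using hti
    have ht0ne : (Finset.univ : Finset (Fin n)).Nonempty := Finset.univ_nonempty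
    set t0 : ℝ := Finset.univ.inf' ht0ne ti with ht0def
    have ht0pos : 0 < t0 := by
      rw [ht0def, Finset.lt_inf'_iff]
      exact fun i _ => hti0 i
    have hmain := hstat (θh - t0 • u)
    have hddt : ∀ i, dd (θh - t0 • u) i = d i + t0 * v i := by
      intro i
      show Pin i - M.mulVec (θh - t0 • u) i = d i + t0 * v i
      have h1 : M.mulVec (θh - t0 • u) = M.mulVec θh - t0 • M.mulVec u := by
        rw [Matrix.mulVec_sub, Matrix.mulVec_smul]
      rw [h1]
      have h2 := hddθh i
      show Pin i - (M.mulVec θh i - t0 * v i) = d i + t0 * v i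
      linarith
    have hsum1 : (∑ i, (f0 i (dd (θh - t0 • u) i) + f2 i (dd (θh - t0 • u) i)))
        = ∑ i, (f0 i (d i + t0 * v i) + f2 i (d i + t0 * v i)) :=
      Finset.sum_congr rfl fun i _ => by rw [hddt i]
    have hdot : wv ⬝ᵥ (θh - t0 • u) = wv ⬝ᵥ θh - t0 * (wv ⬝ᵥ u) := by
      rw [dotProduct_sub, dotProduct_smul]
      simp [smul_eq_mul]
    rw [hsum1, hdot] at hmain
    have hquot : t0 * (wv ⬝ᵥ u)
        ≤ ∑ i, ((f0 i (d i + t0 * v i) + f2 i (d i + t0 * v i)) - (f0 i (d i) + f2 i (d i))) := by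
      rw [Finset.sum_sub_distrib]
      linarith only [hmain]
    have hbound : ∀ i ∈ Finset.univ,
        (f0 i (d i + t0 * v i) + f2 i (d i + t0 * v i)) - (f0 i (d i) + f2 i (d i))
          ≤ t0 * (v i * μs i + δ) :=
      fun i _ => htib i t0 ht0pos (Finset.inf'_le _ (Finset.mem_univ i))
    have hsum3 : (∑ i, t0 * (v i * μs i + δ)) = t0 * ((∑ i, v i * μs i) + n * δ) := by
      rw [← Finset.mul_sum, Finset.sum_add_distrib, Finset.sum_const, Finset.card_univ,
        Fintype.card_fin, nsmul_eq_mul]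
    have hfin : t0 * (wv ⬝ᵥ u) ≤ t0 * ((∑ i, v i * μs i) + n * δ) :=
      le_trans hquot (le_trans (Finset.sum_le_sum hbound) (le_of_eq hsum3))
    have hdiv : wv ⬝ᵥ u ≤ (∑ i, v i * μs i) + n * δ := le_of_mul_le_mul_left hfin ht0pos
    have hnδ : (n : ℝ) * δ ≤ ε := by
      rw [hδ, ← mul_div_assoc, div_le_iff₀ (by positivity : (0:ℝ) < (n:ℝ) + 1)]
      nlinarith [hε, Nat.cast_nonneg (α := ℝ) n]
    linarith only [hdiv, hnδ]
  have hlohi : ∀ i, lo i ≤ hi i := by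
    intro i
    show deriv (f0 i) (d i) + p i ≤ deriv (f0 i) (d i) + q i
    linarith [hpq i]
  obtain ⟨mu0, hmu0box, hmu0eq⟩ := exists_box_preimage M lo hi hlohi wv hsep
  -- assemble the KKT multipliers
  refine ⟨ω, fun i => mu0 i + z i, νm, νp, ?_, rfl, ?_, ?_, hfeas1, hfeas2, ?_, ?_⟩
  · -- stationarity in d
    intro i
    refine ⟨mu0 i - deriv (f0 i) (d i), z i, ?_, ?_, ?_⟩
    · have h1 : deriv (f0 i) (d i) + p i ≤ mu0 i := (hmu0box i).1
      have h2 : mu0 i ≤ deriv (f0 i) (d i) + q i := (hmu0box i).2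
      exact hsg i _ (by linarith) (by linarith)
    · intro y hy
      have ha0 : 0 ≤ aa i := hνnn (Sum.inl (Sum.inl i))
      have hb0 : 0 ≤ bb i := hνnn (Sum.inl (Sum.inr i))
      have hacomp : aa i * (dlo i - dd θh i) = 0 := hνcomp (Sum.inl (Sum.inl i))
      have hbcomp : bb i * (dd θh i - dhi i) = 0 := hνcomp (Sum.inl (Sum.inr i))
      rw [hddθh'] at hacomp hbcomp
      have hay : 0 ≤ aa i * (y - d i) := by
        rcases mul_eq_zero.mp hacomp with h' | h'
        · rw [h', zero_mul]
        · have hdi : d i = dlo i := by linarith [sub_eq_zero.mp h']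
          apply mul_nonneg ha0
          rw [hdi]
          linarith [hy.1]
      have hby : bb i * (y - d i) ≤ 0 := by
        rcases mul_eq_zero.mp hbcomp with h' | h'
        · rw [h', zero_mul]
        · have hdi : d i = dhi i := sub_eq_zero.mp h'
          apply mul_nonpos_of_nonneg_of_nonpos hb0
          rw [hdi]
          linarith [hy.2]
      have hzi : z i * (y - d i) = bb i * (y - d i) - aa i * (y - d i) := by
        show (bb i - aa i) * (y - d i) = _
        ring
      linarith [hzi, hay, hby]
    · show ω i + (mu0 i + z i) = deriv (f0 i) (d i) + (mu0 i - deriv (f0 i) (d i)) + z i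
      have hωi : ω i = 0 := by rw [hωzero]; rfl
      rw [hωi]
      ring
  · -- stationarity in θ
    have hsplit : M.mulVec (fun i => mu0 i + z i) = M.mulVec mu0 + M.mulVec z := by
      have h0 : (fun i => mu0 i + z i) = mu0 + z := rfl
      rw [h0, Matrix.mulVec_add]
    rw [hsplit, hmu0eq, hwv]
    have h2 : (νm - νp : Fin l → ℝ) = -(fun e => νp e - νm e) := by
      funext e
      show νm e - νp e = -(νp e - νm e)
      ring
    rw [h2, Matrix.mulVec_neg]
    abel
  · -- Cᵀ lam = 0
    rw [hωzero]
    exact Matrix.mulVec_zero _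
  · -- lower line limits
    intro e
    exact ⟨hνnn (Sum.inr (Sum.inl e)), (hfeas3 e).1, hνcomp (Sum.inr (Sum.inl e))⟩
  · -- upper line limits
    intro e
    exact ⟨hνnn (Sum.inr (Sum.inr e)), (hfeas3 e).2, hνcomp (Sum.inr (Sum.inr e))⟩
end

section
/- Let κ ∈ (0, 1) and suppose (η*, d*, θ̂*, ω*, P*, λ*, μ*, ν⁻*, ν⁺*) satisfies the DPPD equilibrium conditions: for each i, −κηᵢ* ∈ ∂f_{i,2}(dᵢ*) and λᵢ* + μᵢ* + κηᵢ* − f_{i,0}'(dᵢ*) ∈ N_{Ωᵢ}(dᵢ*); ω* = λ*; C B (ν⁻* − ν⁺*) + C B Cᵀ μ* = 0; Cᵀλ* = 0; P^in − d* − Dω* − CP* = 0; P^in − d* − C B Cᵀ θ̂* = 0; and for each line e: ν⁻*ₑ ≥ 0, P̲ₑ ≤ (B Cᵀ θ̂*)ₑ, ν⁻*ₑ(P̲ₑ − (B Cᵀ θ̂*)ₑ) = 0, ν⁺*ₑ ≥ 0, (B Cᵀ θ̂*)ₑ ≤ P̄ₑ, and ν⁺*ₑ((B Cᵀ θ̂*)ₑ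 − P̄ₑ) = 0. Then ω* = 0, C P* = C B Cᵀ θ̂*, and (d*, θ̂*, ω*, P*) is an optimal solution of the ROLC problem. -/
open Matrix

open Matrix in
private lemma aux_dot {m k : Type*} [Fintype m] [Fintype k]
    (A : Matrix m k ℝ) (u : m → ℝ) (v : k → ℝ) :
    u ⬝ᵥ A.mulVec v = Aᵀ.mulVec u ⬝ᵥ v := by
  rw [Matrix.dotProduct_mulVec, Matrix.mulVec_transpose]

/-- A DPPD equilibrium point yields `ω* = 0`, `C P* = C B Cᵀ θ̂*`, and
`(d*, θ̂*, ω*, P*)` is an optimal solution of the ROLC problem. -/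
theorem equilibrium_implies_optimal
    {n l : ℕ} (hn : 0 < n) (hl : 0 < l)
    (C : Matrix (Fin n) (Fin l) ℝ)
    (hC1 : Matrix.vecMul (fun _ => (1:ℝ)) C = 0)
    (hker : ∀ x : Fin n → ℝ, Cᵀ.mulVec x = 0 ↔ ∃ c : ℝ, x = fun _ => c)
    (B : Matrix (Fin l) (Fin l) ℝ)
    (hBdiag : ∀ e f, e ≠ f → B e f = 0) (hBpos : ∀ e, 0 < B e e)
    (D : Matrix (Fin n) (Fin n) ℝ)
    (hDdiag : ∀ i j, i ≠ j → D i j = 0) (hDpos : ∀ i, 0 < D i i)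
    (Pin : Fin n → ℝ)
    (dlo dhi : Fin n → ℝ) (hbox : ∀ i, dlo i ≤ dhi i)
    (f0 : Fin n → ℝ → ℝ) (hf0diff : ∀ i, Differentiable ℝ (f0 i))
    (β : ℝ) (hβ : 1 < β)
    (hf0sc : ∀ (i : Fin n) (x y : ℝ),
      f0 i x + deriv (f0 i) x * (y - x) + β / 2 * (y - x) ^ 2 ≤ f0 i y)
    (f2 : Fin n → ℝ → ℝ) (hf2conv : ∀ i, ConvexOn ℝ Set.univ (f2 i))
    (Plo Phi : Fin l → ℝ)
    (κ : ℝ) (hκ : κ ∈ Set.Ioo (0:ℝ) 1)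
    -- the equilibrium point
    (ηs ds θhs ωs lams μs : Fin n → ℝ) (Ps νms νps : Fin l → ℝ)
    -- DPPD equilibrium conditions
    (heq1 : ∀ i, ∀ y : ℝ, f2 i (ds i) + (-κ * ηs i) * (y - ds i) ≤ f2 i y)
    (heq2 : ∀ i, ds i ∈ Set.Icc (dlo i) (dhi i) ∧
      ∀ y ∈ Set.Icc (dlo i) (dhi i),
        (lams i + μs i + κ * ηs i - deriv (f0 i) (ds i)) * (y - ds i) ≤ 0)
    (heq3 : ωs = lams)
    (heq4 : (C * B).mulVec (νms - νps) + (C * B * Cᵀ).mulVec μs = 0)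
    (heq5 : Cᵀ.mulVec lams = 0)
    (heq6 : Pin - ds - D.mulVec ωs - C.mulVec Ps = 0)
    (heq7 : Pin - ds - (C * B * Cᵀ).mulVec θhs = 0)
    (heq8 : ∀ e, 0 ≤ νms e ∧ Plo e ≤ B.mulVec (Cᵀ.mulVec θhs) e ∧
      νms e * (Plo e - B.mulVec (Cᵀ.mulVec θhs) e) = 0)
    (heq9 : ∀ e, 0 ≤ νps e ∧ B.mulVec (Cᵀ.mulVec θhs) e ≤ Phi e ∧
      νps e * (B.mulVec (Cᵀ.mulVec θhs) e - Phi e) = 0) :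
    -- conclusions
    ωs = 0 ∧
    C.mulVec Ps = (C * B * Cᵀ).mulVec θhs ∧
    ((∀ i, ds i ∈ Set.Icc (dlo i) (dhi i)) ∧
      Pin - ds - D.mulVec ωs - C.mulVec Ps = 0 ∧
      Pin - ds - (C * B * Cᵀ).mulVec θhs = 0 ∧
      (∀ e, Plo e ≤ B.mulVec (Cᵀ.mulVec θhs) e ∧ B.mulVec (Cᵀ.mulVec θhs) e ≤ Phi e) ∧
      ∀ (d' θh' ω' : Fin n → ℝ) (P' : Fin l → ℝ),
        (∀ i, d' i ∈ Set.Icc (dlo i) (dhi i)) →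
        Pin - d' - D.mulVec ω' - C.mulVec P' = 0 →
        Pin - d' - (C * B * Cᵀ).mulVec θh' = 0 →
        (∀ e, Plo e ≤ B.mulVec (Cᵀ.mulVec θh') e ∧ B.mulVec (Cᵀ.mulVec θh') e ≤ Phi e) →
        (∑ i, (f0 i (ds i) + f2 i (ds i))) + (1 / 2) * (ωs ⬝ᵥ D.mulVec ωs) ≤
          (∑ i, (f0 i (d' i) + f2 i (d' i))) + (1 / 2) * (ω' ⬝ᵥ D.mulVec ω')) := by
  -- diagonal matrices act componentwise
  have hDmul : ∀ (v : Fin n → ℝ) i, D.mulVec v i = D i i * v i := by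
    intro v i
    simp only [Matrix.mulVec, dotProduct]
    rw [Finset.sum_eq_single i (fun j _ hj => by rw [hDdiag i j hj.symm]; ring)
      (by simp)]
  -- sum of C *ᵥ v over all rows vanishes
  have hsumC : ∀ v : Fin l → ℝ, ∑ i, C.mulVec v i = 0 := by
    intro v
    have h1 : ∑ i, C.mulVec v i = ∑ e, (Matrix.vecMul (fun _ => (1:ℝ)) C) e * v e := by
      simp only [Matrix.mulVec, Matrix.vecMul, dotProduct, one_mul]
      rw [Finset.sum_comm]
      simp [Finset.sum_mul]
    rw [h1, hC1]; simp
  -- lams is constant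
  obtain ⟨c, hc⟩ := (hker lams).mp heq5
  -- D ωs = CBCᵀ θhs − C Ps
  have hDω : ∀ i, D.mulVec ωs i = (C * B * Cᵀ).mulVec θhs i - C.mulVec Ps i := by
    intro i
    have h6 := congrFun heq6 i
    have h7 := congrFun heq7 i
    simp only [Pi.sub_apply, Pi.zero_apply] at h6 h7
    linarith
  -- summing gives c = 0
  have hc0 : c = 0 := by
    have hs : ∑ i, D.mulVec ωs i = 0 := by
      rw [Finset.sum_congr rfl (fun i _ => hDω i), Finset.sum_sub_distrib]
      have h1 : (C * B * Cᵀ).mulVec θhs = C.mulVec ((B * Cᵀ).mulVec θhs) := by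
        rw [Matrix.mulVec_mulVec, Matrix.mul_assoc]
      rw [h1, hsumC, hsumC]; ring
    have hs2 : ∑ i, D i i * c = 0 := by
      rw [← hs]
      refine Finset.sum_congr rfl fun i _ => ?_
      rw [hDmul, heq3, hc]
    have hpos : 0 < ∑ i : Fin n, D i i :=
      Finset.sum_pos (fun i _ => hDpos i)
        (by simp [Finset.univ_nonempty_iff, Fin.pos_iff_nonempty.mp hn])
    have : (∑ i : Fin n, D i i) * c = 0 := by rw [Finset.sum_mul]; exact hs2
    exact (mul_eq_zero.mp this).resolve_left (ne_of_gt hpos)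
  have hω0 : ωs = 0 := by rw [heq3, hc, hc0]; rfl
  have hlam0 : lams = 0 := by rw [← heq3, hω0]
  have hCP : C.mulVec Ps = (C * B * Cᵀ).mulVec θhs := by
    funext i
    have := hDω i
    rw [hω0] at this
    simp at this
    linarith
  refine ⟨hω0, hCP, fun i => (heq2 i).1, heq6, heq7,
    fun e => ⟨(heq8 e).2.1, (heq9 e).2.1⟩, ?_⟩
  intro d' θh' ω' P' hd' h6' h7' h8'
  -- ωs term is 0
  have hωs0 : ωs ⬝ᵥ D.mulVec ωs = 0 := by rw [hω0]; simp [dotProduct]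
  -- ω' term nonneg
  have hω'nn : 0 ≤ ω' ⬝ᵥ D.mulVec ω' := by
    apply Finset.sum_nonneg
    intro i _
    rw [hDmul]
    nlinarith [hDpos i, sq_nonneg (ω' i)]
  -- pointwise convexity inequality
  have hpt : ∀ i, f0 i (ds i) + f2 i (ds i) + μs i * (d' i - ds i)
      ≤ f0 i (d' i) + f2 i (d' i) := by
    intro i
    have h0 := hf0sc i (ds i) (d' i)
    have h2 := heq1 i (d' i)
    have h3 := (heq2 i).2 (d' i) (hd' i)
    have hl0 : lams i = 0 := by rw [hlam0]; rfl
    rw [hl0] at h3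
    nlinarith [sq_nonneg (d' i - ds i), hβ]
  -- d' - ds = CBCᵀ (θhs - θh')
  have hdd : (fun i => d' i - ds i) = (C * B * Cᵀ).mulVec (θhs - θh') := by
    funext i
    have h7 := congrFun heq7 i
    have h7' := congrFun h7' i
    simp only [Pi.sub_apply, Pi.zero_apply] at h7 h7'
    rw [Matrix.mulVec_sub]
    simp only [Pi.sub_apply]
    linarith
  have hBsymm : Bᵀ = B := by
    ext e f
    by_cases h : e = f
    · subst h; simp
    · rw [Matrix.transpose_apply, hBdiag e f h, hBdiag f e (Ne.symm h)]
  have hMsymm : (C * B * Cᵀ)ᵀ = C * B * Cᵀ := by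
    rw [Matrix.transpose_mul, Matrix.transpose_mul, Matrix.transpose_transpose,
      hBsymm, Matrix.mul_assoc]
  have h2 : (C * B * Cᵀ).mulVec μs = -(C * B).mulVec (νms - νps) := by
    funext e
    have he := congrFun heq4 e
    simp only [Pi.add_apply, Pi.zero_apply, Pi.neg_apply] at he ⊢
    linarith
  -- key: ⟨μs, d' - ds⟩ ≥ 0
  have hkey : 0 ≤ μs ⬝ᵥ (C * B * Cᵀ).mulVec (θhs - θh') := by
    rw [aux_dot, hMsymm, h2, neg_dotProduct]
    have h4 : (C * B).mulVec (νms - νps) ⬝ᵥ (θhs - θh')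
        = (νms - νps) ⬝ᵥ (B * Cᵀ).mulVec (θhs - θh') := by
      rw [dotProduct_comm, aux_dot, Matrix.transpose_mul, hBsymm,
        dotProduct_comm]
    rw [h4, neg_nonneg]
    apply Finset.sum_nonpos
    intro e _
    have hq : (B * Cᵀ).mulVec (θhs - θh') e
        = B.mulVec (Cᵀ.mulVec θhs) e - B.mulVec (Cᵀ.mulVec θh') e := by
      rw [← Matrix.mulVec_mulVec, Matrix.mulVec_sub, Matrix.mulVec_sub]
      simp
    simp only [Pi.sub_apply]
    rw [hq]
    obtain ⟨hm0, hmlo, hmcs⟩ := heq8 e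
    obtain ⟨hp0, hphi, hpcs⟩ := heq9 e
    obtain ⟨hlo', hhi'⟩ := h8' e
    nlinarith [mul_nonneg hm0 (sub_nonneg.mpr hlo'), mul_nonneg hp0 (sub_nonneg.mpr hhi')]
  have hsum : (∑ i, (f0 i (ds i) + f2 i (ds i))) + ∑ i, μs i * (d' i - ds i)
      ≤ ∑ i, (f0 i (d' i) + f2 i (d' i)) := by
    rw [← Finset.sum_add_distrib]
    exact Finset.sum_le_sum fun i _ => hpt i
  have hdot : ∑ i, μs i * (d' i - ds i) = μs ⬝ᵥ (C * B * Cᵀ).mulVec (θhs - θh') := by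
    rw [← hdd]; rfl
  rw [hωs0]
  have hnn : 0 ≤ ∑ i, μs i * (d' i - ds i) := by rw [hdot]; exact hkey
  linarith
end

section
/- Let C be a real n×l matrix with 𝟏ᵀC = 0 and ker(Cᵀ) = span{𝟏}, let D be an n×n diagonal matrix with positive diagonal entries, and let B be any l×l real matrix. If ω ∈ ℝⁿ, θ̂ ∈ ℝⁿ, P ∈ ℝˡ, d ∈ ℝⁿ, and P^in ∈ ℝⁿ satisfy Cᵀω = 0, P^in − d − Dω − CP = 0, and P^in − d − C B Cᵀ θ̂ = 0, then ω = 0. -/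
open Matrix

/-- If `𝟏ᵀC = 0`, `ker Cᵀ = span 𝟏`, `D` is diagonal with positive diagonal,
and the two power-balance equations together with `Cᵀω = 0` hold, then `ω = 0`. -/
theorem frequency_restoration
    {n l : ℕ} (hn : 0 < n) (hl : 0 < l)
    (C : Matrix (Fin n) (Fin l) ℝ)
    (hC1 : Matrix.vecMul (fun _ => (1:ℝ)) C = 0)
    (hker : ∀ x : Fin n → ℝ, Cᵀ.mulVec x = 0 ↔ ∃ c : ℝ, x = fun _ => c)
    (D : Matrix (Fin n) (Fin n) ℝ)
    (hDdiag : ∀ i j, i ≠ j → D i j = 0) (hDpos : ∀ i, 0 < D i i)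
    (B : Matrix (Fin l) (Fin l) ℝ)
    (ω θh : Fin n → ℝ) (P : Fin l → ℝ) (d Pin : Fin n → ℝ)
    (hω : Cᵀ.mulVec ω = 0)
    (h1 : Pin - d - D.mulVec ω - C.mulVec P = 0)
    (h2 : Pin - d - (C * B * Cᵀ).mulVec θh = 0) :
    ω = 0 := by
  obtain ⟨c, hc⟩ := (hker ω).mp hω
  subst hc
  -- Dω = C (B Cᵀ θh - P)
  have hD : D.mulVec (fun _ => c) =
      C.mulVec (B.mulVec (Cᵀ.mulVec θh) - P) := by
    have h3 : D.mulVec (fun _ => c) + C.mulVec P = (C * B * Cᵀ).mulVec θh := by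
      funext i
      have e1 := congrFun h1 i
      have e2 := congrFun h2 i
      simp [Pi.sub_apply] at e1 e2
      simp [Pi.add_apply]
      linarith
    rw [Matrix.mulVec_sub]
    rw [Matrix.mul_assoc, ← Matrix.mulVec_mulVec, ← Matrix.mulVec_mulVec] at h3
    funext i
    have := congrFun h3 i
    simp [Pi.sub_apply, Pi.add_apply] at this ⊢
    linarith
  -- dot with 1
  have hdot : (fun _ => (1:ℝ)) ⬝ᵥ D.mulVec (fun _ => c) = 0 := by
    rw [hD, Matrix.dotProduct_mulVec, hC1, zero_dotProduct]
  have hsum : ∑ i, D i i * c = 0 := by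
    rw [dotProduct, ← hdot] at *
    apply Finset.sum_congr rfl
    intro i _
    have : D.mulVec (fun _ => c) i = D i i * c := by
      simp only [Matrix.mulVec, dotProduct]
      rw [Finset.sum_eq_single i]
      · intro j _ hj; rw [hDdiag i j (Ne.symm hj), zero_mul]
      · intro h; exact absurd (Finset.mem_univ i) h
    rw [this, one_mul]
  have hc0 : c = 0 := by
    by_contra hc0
    have hpos : 0 < ∑ i, D i i := Finset.sum_pos (fun i _ => hDpos i)
      ⟨⟨0, hn⟩, Finset.mem_univ _⟩
    rw [← Finset.sum_mul] at hsum
    exact hc0 (by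
      rcases mul_eq_zero.mp hsum with h | h
      · exact absurd h (ne_of_gt hpos)
      · exact h)
  funext i
  simp [hc0]
end

section
/- Assume Slater's condition. Define the OLC problem: minimize G(d) := Σᵢ (f_{i,0}(dᵢ) + f_{i,2}(dᵢ)) over (d, θ, ω) ∈ ℝⁿ × ℝⁿ × ℝⁿ subject to d ∈ Ω, d = P^in − Dω − C B Cᵀ θ, ω = 0, and P̲ ≤ B Cᵀ θ ≤ P̄ componentwise. If (d*, θ̂*, ω*, P*) is an optimal solution of the ROLC problem and θ* ∈ ℝⁿ satisfies Cᵀθ* = Cᵀθ̂* and B Cᵀ θ* = P*, then (d*, θ*, ω*) is an optimal solution of the OLC problem. -/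
open Matrix

/-- Under Slater's condition, if `(d*, θ̂*, ω*, P*)` is optimal for the ROLC
problem and `θ*` satisfies `Cᵀθ* = Cᵀθ̂*` and `B Cᵀ θ* = P*`, then `(d*, θ*, ω*)` is an
optimal solution of the OLC problem. -/
theorem rolc_optimal_implies_olc_optimal
    {n l : ℕ} (hn : 0 < n) (hl : 0 < l)
    (C : Matrix (Fin n) (Fin l) ℝ)
    (hC1 : Matrix.vecMul (fun _ => (1:ℝ)) C = 0)
    (hker : ∀ x : Fin n → ℝ, Cᵀ.mulVec x = 0 ↔ ∃ c : ℝ, x = fun _ => c)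
    (B : Matrix (Fin l) (Fin l) ℝ)
    (hBdiag : ∀ e f, e ≠ f → B e f = 0) (hBpos : ∀ e, 0 < B e e)
    (D : Matrix (Fin n) (Fin n) ℝ)
    (hDdiag : ∀ i j, i ≠ j → D i j = 0) (hDpos : ∀ i, 0 < D i i)
    (Pin : Fin n → ℝ)
    (dlo dhi : Fin n → ℝ) (hbox : ∀ i, dlo i ≤ dhi i)
    (f0 : Fin n → ℝ → ℝ) (hf0diff : ∀ i, Differentiable ℝ (f0 i))
    (β : ℝ) (hβ : 1 < β)
    (hf0sc : ∀ (i : Fin n) (x y : ℝ),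
      f0 i x + deriv (f0 i) x * (y - x) + β / 2 * (y - x) ^ 2 ≤ f0 i y)
    (f2 : Fin n → ℝ → ℝ) (hf2conv : ∀ i, ConvexOn ℝ Set.univ (f2 i))
    (Plo Phi : Fin l → ℝ)
    -- Slater's condition
    (hslater : ∃ (dt θt : Fin n → ℝ),
      (∀ i, dlo i < dt i ∧ dt i < dhi i) ∧
      Pin - dt - (C * B * Cᵀ).mulVec θt = 0 ∧
      (∀ e, Plo e < B.mulVec (Cᵀ.mulVec θt) e ∧ B.mulVec (Cᵀ.mulVec θt) e < Phi e))
    -- the ROLC-optimal point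
    (ds θhs ωs : Fin n → ℝ) (Ps : Fin l → ℝ)
    (hfeas_box : ∀ i, ds i ∈ Set.Icc (dlo i) (dhi i))
    (hfeas1 : Pin - ds - D.mulVec ωs - C.mulVec Ps = 0)
    (hfeas2 : Pin - ds - (C * B * Cᵀ).mulVec θhs = 0)
    (hfeas3 : ∀ e, Plo e ≤ B.mulVec (Cᵀ.mulVec θhs) e ∧ B.mulVec (Cᵀ.mulVec θhs) e ≤ Phi e)
    (hopt : ∀ (d' θh' ω' : Fin n → ℝ) (P' : Fin l → ℝ),
      (∀ i, d' i ∈ Set.Icc (dlo i) (dhi i)) →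
      Pin - d' - D.mulVec ω' - C.mulVec P' = 0 →
      Pin - d' - (C * B * Cᵀ).mulVec θh' = 0 →
      (∀ e, Plo e ≤ B.mulVec (Cᵀ.mulVec θh') e ∧ B.mulVec (Cᵀ.mulVec θh') e ≤ Phi e) →
      (∑ i, (f0 i (ds i) + f2 i (ds i))) + (1 / 2) * (ωs ⬝ᵥ D.mulVec ωs) ≤
        (∑ i, (f0 i (d' i) + f2 i (d' i))) + (1 / 2) * (ω' ⬝ᵥ D.mulVec ω'))
    -- the recovered true phase angle
    (θs : Fin n → ℝ)
    (hθ1 : Cᵀ.mulVec θs = Cᵀ.mulVec θhs)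
    (hθ2 : B.mulVec (Cᵀ.mulVec θs) = Ps) :
    -- (d*, θ*, ω*) is an optimal solution of the OLC problem
    ((∀ i, ds i ∈ Set.Icc (dlo i) (dhi i)) ∧
      ds = Pin - D.mulVec ωs - (C * B * Cᵀ).mulVec θs ∧
      ωs = 0 ∧
      (∀ e, Plo e ≤ B.mulVec (Cᵀ.mulVec θs) e ∧ B.mulVec (Cᵀ.mulVec θs) e ≤ Phi e)) ∧
    (∀ (d' θ' ω' : Fin n → ℝ),
      (∀ i, d' i ∈ Set.Icc (dlo i) (dhi i)) →
      d' = Pin - D.mulVec ω' - (C * B * Cᵀ).mulVec θ' →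
      ω' = 0 →
      (∀ e, Plo e ≤ B.mulVec (Cᵀ.mulVec θ') e ∧ B.mulVec (Cᵀ.mulVec θ') e ≤ Phi e) →
      (∑ i, (f0 i (ds i) + f2 i (ds i))) ≤ (∑ i, (f0 i (d' i) + f2 i (d' i)))) := by

  classical
  -- rewrite (C*B*Cᵀ).mulVec as composition
  have hcomp : ∀ θ : Fin n → ℝ, (C * B * Cᵀ).mulVec θ = C.mulVec (B.mulVec (Cᵀ.mulVec θ)) := by
    intro θ
    rw [← Matrix.mulVec_mulVec, ← Matrix.mulVec_mulVec]
  have hCBC : (C * B * Cᵀ).mulVec θs = (C * B * Cᵀ).mulVec θhs := by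
    rw [hcomp, hcomp, hθ1]
  -- quadratic form
  have hquad : ∀ ω : Fin n → ℝ, ω ⬝ᵥ D.mulVec ω = ∑ i, D i i * ω i ^ 2 := by
    intro ω
    unfold dotProduct Matrix.mulVec
    refine Finset.sum_congr rfl fun i _ => ?_
    have : (fun j => D i j * ω j) = fun j => if j = i then D i i * ω i else 0 := by
      funext j
      by_cases h : j = i
      · simp [h]
      · simp [h, hDdiag i j (Ne.symm h)]
    simp only [dotProduct]
    rw [show (∑ j, D i j * ω j) = ∑ j, (if j = i then D i i * ω i else 0) by
      exact Finset.sum_congr rfl fun j _ => by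
        by_cases h : j = i
        · simp [h]
        · simp [h, hDdiag i j (Ne.symm h)]]
    rw [Finset.sum_ite_eq' Finset.univ i (fun _ => D i i * ω i)]
    simp; ring
  -- ωs = 0
  have hω0 : ωs = 0 := by
    have hfeas1' : Pin - ds - D.mulVec 0 - C.mulVec (B.mulVec (Cᵀ.mulVec θhs)) = 0 := by
      have := hfeas2
      rw [hcomp] at this
      simpa [Matrix.mulVec_zero] using this
    have hle := hopt ds θhs 0 (B.mulVec (Cᵀ.mulVec θhs)) hfeas_box hfeas1' hfeas2 hfeas3
    have hz : (0 : Fin n → ℝ) ⬝ᵥ D.mulVec 0 = 0 := by simp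
    rw [hz] at hle
    have hqle : ωs ⬝ᵥ D.mulVec ωs ≤ 0 := by linarith
    rw [hquad] at hqle
    have hterm : ∀ i ∈ Finset.univ, (0:ℝ) ≤ D i i * ωs i ^ 2 := fun i _ =>
      mul_nonneg (hDpos i).le (sq_nonneg _)
    have hall : ∀ i ∈ Finset.univ, D i i * ωs i ^ 2 = 0 := by
      have := (Finset.sum_eq_zero_iff_of_nonneg hterm).mp
        (le_antisymm hqle (Finset.sum_nonneg hterm))
      exact this
    funext i
    have := hall i (Finset.mem_univ i)
    have h2 : ωs i ^ 2 = 0 := by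
      rcases mul_eq_zero.mp this with h | h
      · exact absurd h (hDpos i).ne'
      · exact h
    simpa using pow_eq_zero_iff (n := 2) (by norm_num) |>.mp h2
  have hDω : D.mulVec ωs = 0 := by rw [hω0]; simp
  constructor
  · refine ⟨hfeas_box, ?_, hω0, ?_⟩
    · rw [hCBC, hDω]
      funext i
      have := congrFun hfeas2 i
      simp only [Pi.sub_apply, Pi.zero_apply] at this ⊢
      linarith
    · intro e
      rw [hθ1]
      exact hfeas3 e
  · intro d' θ' ω' hbox' heq' hω' hP'
    have hfa : Pin - d' - D.mulVec ω' - C.mulVec (B.mulVec (Cᵀ.mulVec θ')) = 0 := by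
      rw [heq', hω']
      funext i
      simp [hcomp, Matrix.mulVec_zero]
    have hfb : Pin - d' - (C * B * Cᵀ).mulVec θ' = 0 := by
      rw [heq', hω']
      funext i
      simp [Matrix.mulVec_zero]
    have hle := hopt d' θ' ω' (B.mulVec (Cᵀ.mulVec θ')) hbox' hfa hfb hP'
    rw [hω0, hω'] at hle
    simpa using hle
end

section
/- Let K ⊆ ℝⁿ be a nonempty closed convex set, let q : ℝ → ℝⁿ be continuous with q(t) ∈ K for all t ≥ 0, and let d : ℝ → ℝⁿ be differentiable with d′(t) = q(t) − d(t) for all t ≥ 0. If d(0) ∈ K, then d(t) ∈ K for all t ≥ 0. -/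
open MeasureTheory intervalIntegral Set

/-- If `d′(t) = q(t) − d(t)` with `q(t) ∈ K` for all `t ≥ 0`, `K` nonempty
closed convex, and `d(0) ∈ K`, then `d(t) ∈ K` for all `t ≥ 0`. -/
theorem invariance_of_convex_set
    {n : ℕ} (K : Set (EuclideanSpace ℝ (Fin n)))
    (hKne : K.Nonempty) (hKcl : IsClosed K) (hKcv : Convex ℝ K)
    (q d : ℝ → EuclideanSpace ℝ (Fin n))
    (hq : Continuous q) (hqK : ∀ t ≥ (0:ℝ), q t ∈ K)
    (hd : ∀ t ≥ (0:ℝ), HasDerivAt d (q t - d t) t)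
    (h0 : d 0 ∈ K) :
    ∀ t ≥ (0:ℝ), d t ∈ K := by
  -- continuity of d on [0,∞)
  have hdc : ∀ s ≥ (0:ℝ), ContinuousAt d s := fun s hs => (hd s hs).continuousAt
  have hcint : Continuous fun s : ℝ => Real.exp s • q s :=
    (Real.continuous_exp).smul hq
  -- the explicit formula
  have key : ∀ t ≥ (0:ℝ), Real.exp t • d t = d 0 + ∫ s in (0:ℝ)..t, Real.exp s • q s := by
    intro t ht
    set g : ℝ → EuclideanSpace ℝ (Fin n) :=
      fun s => Real.exp s • d s - ∫ u in (0:ℝ)..s, Real.exp u • q u with hg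
    have hgder : ∀ s ∈ Ico (0:ℝ) t, HasDerivWithinAt g 0 (Ici s) s := by
      intro s hs
      have h1 : HasDerivAt (fun s => Real.exp s • d s)
          (Real.exp s • (q s - d s) + Real.exp s • d s) s :=
        (Real.hasDerivAt_exp s).smul (hd s hs.1)
      have h2 : HasDerivAt (fun s => ∫ u in (0:ℝ)..s, Real.exp u • q u)
          (Real.exp s • q s) s :=
        integral_hasDerivAt_right (hcint.intervalIntegrable _ _)
          (hcint.stronglyMeasurableAtFilter _ _) hcint.continuousAt
      have := h1.sub h2
      have hzero : Real.exp s • (q s - d s) + Real.exp s • d s - Real.exp s • q s = 0 := by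
        module
      rw [hzero] at this
      exact this.hasDerivWithinAt
    have hgcont : ContinuousOn g (Icc 0 t) := by
      apply ContinuousOn.sub
      · exact (Real.continuous_exp.continuousOn).smul
          (fun s hs => (hdc s hs.1).continuousWithinAt)
      · refine Continuous.continuousOn ?_
        rw [continuous_iff_continuousAt]
        intro x
        exact (integral_hasDerivAt_right (hcint.intervalIntegrable _ _)
          (hcint.stronglyMeasurableAtFilter _ _) hcint.continuousAt).continuousAt
    have := constant_of_has_deriv_right_zero hgcont hgder t (by constructor <;> [exact ht; rfl])
    simp only [hg] at this
    simp only [intervalIntegral.integral_same, Real.exp_zero, one_smul, sub_zero] at this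
    linear_combination (norm := module) this
  intro t ht
  by_contra hmem
  obtain ⟨f, u, hfu, huf⟩ := geometric_hahn_banach_closed_point hKcv hKcl hmem
  -- compute f (d t)
  have hform : Real.exp t • d t = d 0 + ∫ s in (0:ℝ)..t, Real.exp s • q s := key t ht
  have hfq : ∀ s ∈ Icc (0:ℝ) t, Real.exp s * f (q s) ≤ Real.exp s * u :=
    fun s hs => mul_le_mul_of_nonneg_left (le_of_lt (hfu _ (hqK s hs.1))) (Real.exp_pos s).le
  have hint1 : IntervalIntegrable (fun s => Real.exp s * f (q s)) volume 0 t :=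
    (Real.continuous_exp.mul (f.continuous.comp hq)).intervalIntegrable _ _
  have hint2 : IntervalIntegrable (fun s => Real.exp s * u) volume 0 t :=
    (Real.continuous_exp.mul continuous_const).intervalIntegrable _ _
  have hmono : (∫ s in (0:ℝ)..t, Real.exp s * f (q s)) ≤ ∫ s in (0:ℝ)..t, Real.exp s * u :=
    intervalIntegral.integral_mono_on ht hint1 hint2 hfq
  have hRHS : (∫ s in (0:ℝ)..t, Real.exp s * u) = (Real.exp t - 1) * u := by
    rw [intervalIntegral.integral_mul_const, integral_exp]
    simp [Real.exp_zero]
  have hfd : Real.exp t * f (d t) = f (d 0) + ∫ s in (0:ℝ)..t, Real.exp s * f (q s) := by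
    have := congrArg f hform
    rw [f.map_smul, f.map_add, ← f.intervalIntegral_comp_comm (hcint.intervalIntegrable _ _)] at this
    simp only [f.map_smul, smul_eq_mul] at this ⊢
    exact this
  have hlt : Real.exp t * f (d t) < Real.exp t * u := by
    rw [hfd]
    calc f (d 0) + ∫ s in (0:ℝ)..t, Real.exp s * f (q s)
        < u + (Real.exp t - 1) * u := by
          exact add_lt_add_of_lt_of_le (hfu _ h0) (hRHS ▸ hmono)
      _ = Real.exp t * u := by ring
  have : f (d t) < u := lt_of_mul_lt_mul_left hlt (Real.exp_pos t).le
  exact absurd (this.trans huf) (lt_irrefl _)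
end

section
/- Let K ⊆ ℝⁿ be a nonempty closed convex set, let q : ℝ → ℝⁿ be continuous with q(t) ∈ K for all t ≥ 0, and let d : ℝ → ℝⁿ be differentiable with d′(t) = q(t) − d(t) for all t ≥ 0. Then the distance to K decays exponentially: dist(d(t), K) ≤ e^{−t} · dist(d(0), K) for all t ≥ 0, where dist(x, K) = inf_{z ∈ K} ‖x − z‖. -/
/-- If `d′(t) = q(t) − d(t)` with `q(t) ∈ K` for all `t ≥ 0`, `K` nonempty
closed convex, then `dist(d(t), K) ≤ e^{−t} dist(d(0), K)` for all `t ≥ 0`. -/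
theorem exponential_decay_of_distance
    {n : ℕ} (K : Set (EuclideanSpace ℝ (Fin n)))
    (hKne : K.Nonempty) (hKcl : IsClosed K) (hKcv : Convex ℝ K)
    (q d : ℝ → EuclideanSpace ℝ (Fin n))
    (hq : Continuous q) (hqK : ∀ t ≥ (0:ℝ), q t ∈ K)
    (hd : ∀ t ≥ (0:ℝ), HasDerivAt d (q t - d t) t) :
    ∀ t ≥ (0:ℝ), Metric.infDist (d t) K ≤ Real.exp (-t) * Metric.infDist (d 0) K := by
  intro t ht
  set f : ℝ → ℝ := fun x => Metric.infDist (d x) K with hfdef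
  have hf : ContinuousOn f (Set.Icc 0 t) := by
    intro x hx
    exact ((Metric.continuous_infDist_pt K).continuousAt.comp
      ((hd x hx.1).continuousAt)).continuousWithinAt
  have hf' : ∀ x ∈ Set.Ico (0:ℝ) t, ∀ r, -f x < r →
      ∃ᶠ z in nhdsWithin x (Set.Ioi x), (z - x)⁻¹ * (f z - f x) < r := by
    intro x hx r hr
    apply Filter.Eventually.frequently
    -- choose a nearest point P in K
    obtain ⟨P, hPK, hPdist⟩ := hKcl.exists_infDist_eq_dist hKne (d x)
    have hPx : ‖d x - P‖ = f x := by
      rw [hfdef]; simp only; rw [hPdist, dist_eq_norm]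
    set c : ℝ := r + f x with hc
    have hc0 : 0 < c := by linarith
    have hlo := (hasDerivAt_iff_isLittleO.mp (hd x hx.1)).def (by positivity : (0:ℝ) < c / 2)
    have h1 : ∀ᶠ z in nhdsWithin x (Set.Ioi x),
        ‖d z - d x - (z - x) • (q x - d x)‖ ≤ c / 2 * ‖z - x‖ :=
      nhdsWithin_le_nhds hlo
    have h2 : ∀ᶠ z in nhdsWithin x (Set.Ioi x), z < x + 1 :=
      nhdsWithin_le_nhds (eventually_lt_nhds (by linarith))
    have h3 : ∀ᶠ z in nhdsWithin x (Set.Ioi x), x < z := eventually_mem_nhdsWithin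
    filter_upwards [h1, h2, h3] with z hz1 hz2 hz3
    set h : ℝ := z - x with hh
    have hh0 : 0 < h := by simp [hh]; linarith
    have hh1 : h < 1 := by simp [hh]; linarith
    -- the point w = (1-h)•P + h•(q x) is in K
    have hwK : (1 - h) • P + h • q x ∈ K :=
      hKcv hPK (hqK x hx.1) (by linarith) (le_of_lt hh0) (by ring)
    have hfz : f z ≤ ‖d z - ((1 - h) • P + h • q x)‖ := by
      rw [hfdef]; simp only
      rw [← dist_eq_norm]
      exact Metric.infDist_le_dist_of_mem hwK
    have hdecomp : d z - ((1 - h) • P + h • q x)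
        = (d z - d x - h • (q x - d x)) + (1 - h) • (d x - P) := by
      module
    have hbound : ‖d z - ((1 - h) • P + h • q x)‖
        ≤ c / 2 * h + (1 - h) * f x := by
      rw [hdecomp]
      refine (norm_add_le _ _).trans ?_
      have e1 : ‖d z - d x - h • (q x - d x)‖ ≤ c / 2 * h := by
        have := hz1
        rwa [Real.norm_eq_abs, abs_of_pos hh0] at this
      have e2 : ‖(1 - h) • (d x - P)‖ = (1 - h) * f x := by
        rw [norm_smul, Real.norm_eq_abs, abs_of_nonneg (by linarith), hPx]
      exact add_le_add e1 e2.le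
    have key : f z - f x ≤ h * (c / 2 - f x) := by
      have := hfz.trans hbound
      nlinarith
    have : (z - x)⁻¹ * (f z - f x) ≤ c / 2 - f x := by
      rw [← hh]
      rw [inv_mul_le_iff₀ hh0]
      linarith [key]
    have hfx : 0 ≤ f x := Metric.infDist_nonneg
    calc (z - x)⁻¹ * (f z - f x) ≤ c / 2 - f x := this
      _ < r := by rw [hc]; linarith
  have bound : ∀ x ∈ Set.Ico (0:ℝ) t, -f x ≤ (-1) * f x + 0 := by
    intro x _; ring_nf; exact le_rfl
  have := le_gronwallBound_of_liminf_deriv_right_le hf hf' (le_refl (f 0)) bound t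
    ⟨ht, le_rfl⟩
  rwa [gronwallBound_ε0, sub_zero, neg_one_mul, mul_comm] at this
end

section
/- Let t₀ > 0 and k > 0. Let V : ℝ → ℝ be continuously differentiable on [t₀, ∞) with V(t) ≥ 0 for all t ≥ t₀, and let g : ℝ → ℝ be continuous with g(t) ≥ 0 for all t ≥ t₀. If V′(t) ≤ −k · g(t)² for all t ≥ t₀, then liminf_{t → ∞} √t · g(t) = 0. -/
open Filter

/-- If `V ≥ 0` on `[t₀, ∞)` is continuously differentiable with
`V′(t) ≤ −k g(t)²` for a continuous nonnegative `g`, then `liminf_{t→∞} √t · g(t) = 0`. -/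
theorem liminf_sqrt_mul_eq_zero
    (t₀ k : ℝ) (ht₀ : 0 < t₀) (hk : 0 < k)
    (V g Vd : ℝ → ℝ)
    (hVderiv : ∀ t ≥ t₀, HasDerivAt V (Vd t) t)
    (hVdcont : ContinuousOn Vd (Set.Ici t₀))
    (hVnonneg : ∀ t ≥ t₀, 0 ≤ V t)
    (hgcont : Continuous g)
    (hgnonneg : ∀ t ≥ t₀, 0 ≤ g t)
    (hineq : ∀ t ≥ t₀, Vd t ≤ -k * (g t) ^ 2) :
    liminf (fun t : ℝ => Real.sqrt t * g t) atTop = 0 := by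
  -- Key step: for every c > 0, frequently √t * g t < c.
  have key : ∀ c : ℝ, 0 < c → ∃ᶠ t in atTop, Real.sqrt t * g t < c := by
    intro c hc
    by_contra h
    rw [not_frequently] at h
    simp only [not_lt] at h
    obtain ⟨t₁', ht₁'⟩ := eventually_atTop.mp h
    set t₁ : ℝ := max t₁' (max t₀ 1) with ht₁def
    have ht₁t₀ : t₀ ≤ t₁ := le_trans (le_max_left _ _) (le_max_right _ _)
    have ht₁1 : (1:ℝ) ≤ t₁ := le_trans (le_max_right _ _) (le_max_right _ _)
    have ht₁pos : (0:ℝ) < t₁ := lt_of_lt_of_le one_pos ht₁1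
    have hlow : ∀ t ≥ t₁, c ≤ Real.sqrt t * g t := fun t ht =>
      ht₁' t (le_trans (le_max_left _ _) ht)
    -- pointwise bound Vd t ≤ -k*c^2 / t on [t₁, ∞)
    have hpt : ∀ t ≥ t₁, Vd t ≤ -(k * c ^ 2) / t := by
      intro t ht
      have htpos : (0:ℝ) < t := lt_of_lt_of_le ht₁pos ht
      have h1 : c ≤ Real.sqrt t * g t := hlow t ht
      have h2 : c ^ 2 ≤ (Real.sqrt t * g t) ^ 2 := by
        apply sq_le_sq' <;> nlinarith [hc.le]
      have h3 : (Real.sqrt t * g t) ^ 2 = t * (g t) ^ 2 := by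
        rw [mul_pow, Real.sq_sqrt htpos.le]
      have h4 : c ^ 2 / t ≤ (g t) ^ 2 := by
        rw [div_le_iff₀ htpos]
        nlinarith
      have h5 := hineq t (le_trans ht₁t₀ ht)
      rw [neg_div]
      have : k * (c ^ 2 / t) ≤ k * (g t) ^ 2 := by
        exact mul_le_mul_of_nonneg_left h4 hk.le
      rw [mul_div_assoc]
      linarith
    -- choose T large
    set T : ℝ := t₁ * Real.exp (V t₁ / (k * c ^ 2) + 1) with hTdef
    have hkc : 0 < k * c ^ 2 := by positivity
    have hexp1 : (1:ℝ) ≤ Real.exp (V t₁ / (k * c ^ 2) + 1) := by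
      rw [← Real.exp_zero]
      apply Real.exp_le_exp.mpr
      have := hVnonneg t₁ ht₁t₀
      positivity
    have hT : t₁ ≤ T := le_mul_of_one_le_right ht₁pos.le hexp1
    have hTpos : 0 < T := lt_of_lt_of_le ht₁pos hT
    -- FTC
    have hsub : Set.uIcc t₁ T ⊆ Set.Ici t₀ := by
      rw [Set.uIcc_of_le hT]
      intro x hx
      exact le_trans ht₁t₀ hx.1
    have hVdint : IntervalIntegrable Vd MeasureTheory.volume t₁ T :=
      (hVdcont.mono hsub).intervalIntegrable
    have hftc : ∫ t in t₁..T, Vd t = V T - V t₁ := by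
      apply intervalIntegral.integral_eq_sub_of_hasDerivAt
      · intro t ht
        exact hVderiv t (le_trans ht₁t₀ ((Set.uIcc_of_le hT ▸ ht).1))
      · exact hVdint
    have hbint : IntervalIntegrable (fun t => -(k * c ^ 2) / t) MeasureTheory.volume t₁ T := by
      apply ContinuousOn.intervalIntegrable
      apply ContinuousOn.div continuousOn_const continuousOn_id
      intro x hx
      rw [Set.uIcc_of_le hT] at hx
      exact ne_of_gt (lt_of_lt_of_le ht₁pos hx.1)
    have hmono : ∫ t in t₁..T, Vd t ≤ ∫ t in t₁..T, -(k * c ^ 2) / t := by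
      apply intervalIntegral.integral_mono_on hT hVdint hbint
      intro t ht
      exact hpt t ht.1
    have hint2 : ∫ t in t₁..T, -(k * c ^ 2) / t = -(k * c ^ 2) * Real.log (T / t₁) := by
      have h0 : (0:ℝ) ∉ Set.uIcc t₁ T := by
        rw [Set.uIcc_of_le hT]
        intro h0
        exact absurd h0.1 (not_le.mpr ht₁pos)
      have : ∫ t in t₁..T, -(k * c ^ 2) / t = -(k * c ^ 2) * ∫ t in t₁..T, 1 / t := by
        rw [← intervalIntegral.integral_const_mul]
        congr 1; ext t; ring
      rw [this, integral_one_div h0]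
    -- derive contradiction
    have hlog : Real.log (T / t₁) = V t₁ / (k * c ^ 2) + 1 := by
      rw [hTdef, mul_comm, mul_div_assoc, div_self ht₁pos.ne', mul_one, Real.log_exp]
    have hVT := hVnonneg T (le_trans ht₁t₀ hT)
    have : V T - V t₁ ≤ -(k * c ^ 2) * (V t₁ / (k * c ^ 2) + 1) := by
      rw [← hftc, ← hlog, ← hint2]; exact hmono
    have hdiv : k * c ^ 2 * (V t₁ / (k * c ^ 2)) = V t₁ := by
      field_simp
    nlinarith
  -- conclude
  have hfreq1 : ∃ᶠ t in atTop, Real.sqrt t * g t ≤ 1 :=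
    (key 1 one_pos).mono fun t ht => ht.le
  have hcobdd : IsCoboundedUnder (· ≥ ·) atTop (fun t : ℝ => Real.sqrt t * g t) :=
    IsCoboundedUnder.of_frequently_le hfreq1
  have hbdd : IsBoundedUnder (· ≥ ·) atTop (fun t : ℝ => Real.sqrt t * g t) := by
    refine ⟨0, ?_⟩
    rw [eventually_map]
    filter_upwards [eventually_ge_atTop t₀] with t ht
    exact mul_nonneg (Real.sqrt_nonneg t) (hgnonneg t ht)
  refine le_antisymm ?_ ?_
  · by_contra h
    push_neg at h
    set L := liminf (fun t : ℝ => Real.sqrt t * g t) atTop with hL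
    have h1 : L ≤ L / 2 := by
      apply liminf_le_of_frequently_le _ hbdd
      exact (key (L/2) (by linarith)).mono fun t ht => ht.le
    linarith
  · apply le_liminf_of_le hcobdd
    filter_upwards [eventually_ge_atTop t₀] with t ht
    exact mul_nonneg (Real.sqrt_nonneg t) (hgnonneg t ht)
end

section
/- Assume Slater's condition. Then the ROLC problem has an optimal solution: there exists a feasible point (d*, θ̂*, ω*, P*) such that F(d*, ω*) ≤ F(d, ω) for every feasible (d, θ̂, ω, P). -/
open Matrix

/-- Under Slater's condition the ROLC problem has an optimal solution. -/
theorem rolc_has_optimal_solution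
    {n l : ℕ} (hn : 0 < n) (hl : 0 < l)
    (C : Matrix (Fin n) (Fin l) ℝ)
    (hC1 : Matrix.vecMul (fun _ => (1:ℝ)) C = 0)
    (hker : ∀ x : Fin n → ℝ, Cᵀ.mulVec x = 0 ↔ ∃ c : ℝ, x = fun _ => c)
    (B : Matrix (Fin l) (Fin l) ℝ)
    (hBdiag : ∀ e f, e ≠ f → B e f = 0) (hBpos : ∀ e, 0 < B e e)
    (D : Matrix (Fin n) (Fin n) ℝ)
    (hDdiag : ∀ i j, i ≠ j → D i j = 0) (hDpos : ∀ i, 0 < D i i)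
    (Pin : Fin n → ℝ)
    (dlo dhi : Fin n → ℝ) (hbox : ∀ i, dlo i ≤ dhi i)
    (f0 : Fin n → ℝ → ℝ) (hf0diff : ∀ i, Differentiable ℝ (f0 i))
    (β : ℝ) (hβ : 1 < β)
    (hf0sc : ∀ (i : Fin n) (x y : ℝ),
      f0 i x + deriv (f0 i) x * (y - x) + β / 2 * (y - x) ^ 2 ≤ f0 i y)
    (f2 : Fin n → ℝ → ℝ) (hf2conv : ∀ i, ConvexOn ℝ Set.univ (f2 i))
    (Plo Phi : Fin l → ℝ)
    -- Slater's condition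
    (hslater : ∃ (dt θt : Fin n → ℝ),
      (∀ i, dlo i < dt i ∧ dt i < dhi i) ∧
      Pin - dt - (C * B * Cᵀ).mulVec θt = 0 ∧
      (∀ e, Plo e < B.mulVec (Cᵀ.mulVec θt) e ∧ B.mulVec (Cᵀ.mulVec θt) e < Phi e)) :
    ∃ (ds θhs ωs : Fin n → ℝ) (Ps : Fin l → ℝ),
      (∀ i, ds i ∈ Set.Icc (dlo i) (dhi i)) ∧
      Pin - ds - D.mulVec ωs - C.mulVec Ps = 0 ∧
      Pin - ds - (C * B * Cᵀ).mulVec θhs = 0 ∧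
      (∀ e, Plo e ≤ B.mulVec (Cᵀ.mulVec θhs) e ∧ B.mulVec (Cᵀ.mulVec θhs) e ≤ Phi e) ∧
      ∀ (d' θh' ω' : Fin n → ℝ) (P' : Fin l → ℝ),
        (∀ i, d' i ∈ Set.Icc (dlo i) (dhi i)) →
        Pin - d' - D.mulVec ω' - C.mulVec P' = 0 →
        Pin - d' - (C * B * Cᵀ).mulVec θh' = 0 →
        (∀ e, Plo e ≤ B.mulVec (Cᵀ.mulVec θh') e ∧ B.mulVec (Cᵀ.mulVec θh') e ≤ Phi e) →
        (∑ i, (f0 i (ds i) + f2 i (ds i))) + (1 / 2) * (ωs ⬝ᵥ D.mulVec ωs) ≤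
          (∑ i, (f0 i (d' i) + f2 i (d' i))) + (1 / 2) * (ω' ⬝ᵥ D.mulVec ω') := by
  classical
  haveI : Nonempty (Fin n) := Fin.pos_iff_nonempty.mp hn
  obtain ⟨dt, θt, hdt, heqt, hPbt⟩ := hslater
  -- continuity of the cost terms
  have hf2cont : ∀ i, Continuous (f2 i) :=
    fun i => continuousOn_univ.mp ((hf2conv i).continuousOn isOpen_univ)
  have hfc : ∀ i, Continuous (fun x : ℝ => f0 i x + f2 i x) :=
    fun i => ((hf0diff i).continuous).add (hf2cont i)
  -- the quadratic form
  have hDmv : ∀ (ω : Fin n → ℝ) (i : Fin n), D.mulVec ω i = D i i * ω i := by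
    intro ω i
    simp only [Matrix.mulVec, dotProduct]
    rw [Finset.sum_eq_single i]
    · intro j _ hj; rw [hDdiag i j (Ne.symm hj), zero_mul]
    · intro h; exact absurd (Finset.mem_univ i) h
  have hquad : ∀ ω : Fin n → ℝ, ω ⬝ᵥ D.mulVec ω = ∑ i, D i i * ω i ^ 2 := by
    intro ω
    simp only [dotProduct]
    refine Finset.sum_congr rfl fun i _ => ?_
    rw [hDmv]; ring
  -- mulVec associativity
  have hassoc : ∀ θ : Fin n → ℝ,
      (C * B * Cᵀ).mulVec θ = C.mulVec (B.mulVec (Cᵀ.mulVec θ)) := by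
    intro θ
    rw [Matrix.mulVec_mulVec, Matrix.mulVec_mulVec]
  -- the objective as a function on the reparametrized space
  set G : ((Fin n → ℝ) × (Fin l → ℝ) × (Fin n → ℝ) × (Fin n → ℝ)) → ℝ :=
    fun p => (∑ i, (f0 i (p.1 i) + f2 i (p.1 i)))
      + (1 / 2) * (p.2.2.1 ⬝ᵥ D.mulVec p.2.2.1) with hG
  have hGcont : Continuous G := by
    rw [hG]
    have c1 : Continuous fun p : (Fin n → ℝ) × (Fin l → ℝ) × (Fin n → ℝ) × (Fin n → ℝ) =>
        ∑ i, (f0 i (p.1 i) + f2 i (p.1 i)) :=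
      continuous_finset_sum _ fun i _ =>
        (hfc i).comp ((continuous_apply i).comp continuous_fst)
    have c2 : Continuous fun p : (Fin n → ℝ) × (Fin l → ℝ) × (Fin n → ℝ) × (Fin n → ℝ) =>
        p.2.2.1 ⬝ᵥ D.mulVec p.2.2.1 := by
      simp only [hquad]
      exact continuous_finset_sum _ fun i _ =>
        continuous_const.mul (((continuous_apply i).comp
          (continuous_fst.comp (continuous_snd.comp continuous_snd))).pow 2)
    exact c1.add (continuous_const.mul c2)
  -- ranges
  set S1 : Submodule ℝ (Fin l → ℝ) := LinearMap.range (B.mulVecLin ∘ₗ Cᵀ.mulVecLin) with hS1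
  set S2 : Submodule ℝ (Fin n → ℝ) := LinearMap.range C.mulVecLin with hS2
  -- constants
  set M : ℝ := ∑ i, (f0 i (dt i) + f2 i (dt i)) with hM
  have hboxne : (Set.Icc dlo dhi : Set (Fin n → ℝ)).Nonempty :=
    ⟨dlo, Set.mem_Icc.mpr ⟨le_rfl, fun i => hbox i⟩⟩
  obtain ⟨dm, hdmmem, hdmmin⟩ := isCompact_Icc.exists_isMinOn hboxne
    ((continuous_finset_sum Finset.univ fun i _ =>
      (hfc i).comp (continuous_apply i)).continuousOn :
      ContinuousOn (fun d : Fin n → ℝ => ∑ i, (f0 i (d i) + f2 i (d i))) _)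
  set m : ℝ := ∑ i, (f0 i (dm i) + f2 i (dm i)) with hm
  have hmle : ∀ d : Fin n → ℝ, d ∈ Set.Icc dlo dhi →
      m ≤ ∑ i, (f0 i (d i) + f2 i (d i)) := fun d hd => isMinOn_iff.mp hdmmin d hd
  set δ : ℝ := Finset.univ.inf' Finset.univ_nonempty (fun i => D i i) with hδ
  have hδpos : 0 < δ := (Finset.lt_inf'_iff _).mpr fun i _ => hDpos i
  have hδle : ∀ i, δ ≤ D i i := fun i => Finset.inf'_le _ (Finset.mem_univ i)
  set Dmax : ℝ := Finset.univ.sup' Finset.univ_nonempty (fun i => D i i) with hDmax'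
  have hDmaxle : ∀ i, D i i ≤ Dmax := fun i => Finset.le_sup' (fun j => D j j) (Finset.mem_univ i)
  have hDmaxpos : 0 < Dmax := lt_of_lt_of_le (hDpos (Classical.arbitrary _)) (hDmaxle _)
  set R : ℝ := Real.sqrt (2 * (M - m) / δ) with hR
  have hR0 : 0 ≤ R := Real.sqrt_nonneg _
  set Rz : ℝ := ‖Pin‖ + (‖dlo‖ + ‖dhi‖) + Dmax * R with hRz
  have hRz0 : 0 ≤ Rz := by
    have := norm_nonneg Pin; have := norm_nonneg dlo; have := norm_nonneg dhi
    have := mul_nonneg hDmaxpos.le hR0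
    rw [hRz]; linarith
  -- the reparametrized feasible set
  set A : Set ((Fin n → ℝ) × (Fin l → ℝ) × (Fin n → ℝ) × (Fin n → ℝ)) :=
    {p | p.1 ∈ Set.Icc dlo dhi ∧
      Pin - p.1 - C.mulVec p.2.1 = 0 ∧
      Pin - p.1 - D.mulVec p.2.2.1 - p.2.2.2 = 0 ∧
      p.2.1 ∈ Set.Icc Plo Phi ∧ p.2.1 ∈ S1 ∧ p.2.2.2 ∈ S2 ∧ G p ≤ M} with hA
  -- projections are continuous
  have hprojd : Continuous fun p : (Fin n → ℝ) × (Fin l → ℝ) × (Fin n → ℝ) × (Fin n → ℝ) =>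
      p.1 := continuous_fst
  have hprojy : Continuous fun p : (Fin n → ℝ) × (Fin l → ℝ) × (Fin n → ℝ) × (Fin n → ℝ) =>
      p.2.1 := continuous_fst.comp continuous_snd
  have hprojω : Continuous fun p : (Fin n → ℝ) × (Fin l → ℝ) × (Fin n → ℝ) × (Fin n → ℝ) =>
      p.2.2.1 := continuous_fst.comp (continuous_snd.comp continuous_snd)
  have hprojz : Continuous fun p : (Fin n → ℝ) × (Fin l → ℝ) × (Fin n → ℝ) × (Fin n → ℝ) =>
      p.2.2.2 := continuous_snd.comp (continuous_snd.comp continuous_snd)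
  have hmvcont : ∀ {k r : ℕ} (Mx : Matrix (Fin k) (Fin r) ℝ),
      Continuous (fun v : Fin r → ℝ => Mx.mulVec v) := by
    intro k r Mx
    refine continuous_pi fun i => ?_
    simp only [Matrix.mulVec, dotProduct]
    exact continuous_finset_sum _ fun j _ => continuous_const.mul (continuous_apply j)
  have hAclosed : IsClosed A := by
    have h1 : IsClosed {p : (Fin n → ℝ) × (Fin l → ℝ) × (Fin n → ℝ) × (Fin n → ℝ) |
        p.1 ∈ Set.Icc dlo dhi} := isClosed_Icc.preimage hprojd
    have h2 : IsClosed {p : (Fin n → ℝ) × (Fin l → ℝ) × (Fin n → ℝ) × (Fin n → ℝ) |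
        Pin - p.1 - C.mulVec p.2.1 = 0} :=
      isClosed_eq ((continuous_const.sub hprojd).sub ((hmvcont C).comp hprojy))
        continuous_const
    have h3 : IsClosed {p : (Fin n → ℝ) × (Fin l → ℝ) × (Fin n → ℝ) × (Fin n → ℝ) |
        Pin - p.1 - D.mulVec p.2.2.1 - p.2.2.2 = 0} :=
      isClosed_eq (((continuous_const.sub hprojd).sub
        ((hmvcont D).comp hprojω)).sub hprojz) continuous_const
    have h4 : IsClosed {p : (Fin n → ℝ) × (Fin l → ℝ) × (Fin n → ℝ) × (Fin n → ℝ) |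
        p.2.1 ∈ Set.Icc Plo Phi} := isClosed_Icc.preimage hprojy
    have h5 : IsClosed {p : (Fin n → ℝ) × (Fin l → ℝ) × (Fin n → ℝ) × (Fin n → ℝ) |
        p.2.1 ∈ S1} := (S1.closed_of_finiteDimensional).preimage hprojy
    have h6 : IsClosed {p : (Fin n → ℝ) × (Fin l → ℝ) × (Fin n → ℝ) × (Fin n → ℝ) |
        p.2.2.2 ∈ S2} := (S2.closed_of_finiteDimensional).preimage hprojz
    have h7 : IsClosed {p : (Fin n → ℝ) × (Fin l → ℝ) × (Fin n → ℝ) × (Fin n → ℝ) |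
        G p ≤ M} := isClosed_le hGcont continuous_const
    exact h1.inter (h2.inter (h3.inter (h4.inter (h5.inter (h6.inter h7)))))
  have hcomp : ∀ θ : Fin n → ℝ, (B.mulVecLin ∘ₗ Cᵀ.mulVecLin) θ = B.mulVec (Cᵀ.mulVec θ) :=
    fun θ => rfl
  have hcomp2 : ∀ P : Fin l → ℝ, C.mulVecLin P = C.mulVec P := fun P => rfl
  -- the Slater point
  set p0 : (Fin n → ℝ) × (Fin l → ℝ) × (Fin n → ℝ) × (Fin n → ℝ) :=
    (dt, B.mulVec (Cᵀ.mulVec θt), 0, C.mulVec (B.mulVec (Cᵀ.mulVec θt))) with hp0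
  have hGp0 : G p0 = M := by
    rw [hG, hp0, hM]
    simp [Matrix.mulVec_zero, dotProduct_zero]
  have hp0A : p0 ∈ A := by
    refine ⟨Set.mem_Icc.mpr ⟨fun i => (hdt i).1.le, fun i => (hdt i).2.le⟩, ?_, ?_,
      Set.mem_Icc.mpr ⟨fun e => (hPbt e).1.le, fun e => (hPbt e).2.le⟩,
      ⟨θt, hcomp θt⟩, ⟨B.mulVec (Cᵀ.mulVec θt), hcomp2 _⟩, le_of_eq hGp0⟩
    · show Pin - dt - C.mulVec (B.mulVec (Cᵀ.mulVec θt)) = 0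
      rw [← hassoc]; exact heqt
    · show Pin - dt - D.mulVec 0 - C.mulVec (B.mulVec (Cᵀ.mulVec θt)) = 0
      rw [Matrix.mulVec_zero, sub_zero, ← hassoc]; exact heqt
  -- bounds on A
  have hωbound : ∀ p ∈ A, ∀ i, |p.2.2.1 i| ≤ R := by
    intro p hp i
    obtain ⟨hpd, -, -, -, -, -, hpG⟩ := id hp
    have hsum : m ≤ ∑ i, (f0 i (p.1 i) + f2 i (p.1 i)) := hmle _ hpd
    have hQ : ∑ j, D j j * p.2.2.1 j ^ 2 ≤ 2 * (M - m) := by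
      have := hpG
      rw [hG] at this
      simp only [hquad] at this
      linarith
    have hterm : D i i * p.2.2.1 i ^ 2 ≤ ∑ j, D j j * p.2.2.1 j ^ 2 :=
      Finset.single_le_sum (fun j _ => mul_nonneg (hDpos j).le (sq_nonneg _))
        (Finset.mem_univ i)
    have hδterm : δ * p.2.2.1 i ^ 2 ≤ 2 * (M - m) := by
      have := mul_le_mul_of_nonneg_right (hδle i) (sq_nonneg (p.2.2.1 i))
      linarith
    have hsq : p.2.2.1 i ^ 2 ≤ 2 * (M - m) / δ := by
      rw [le_div_iff₀ hδpos]; linarith [hδterm]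
    calc |p.2.2.1 i| = Real.sqrt (p.2.2.1 i ^ 2) := (Real.sqrt_sq_eq_abs _).symm
      _ ≤ R := by rw [hR]; exact Real.sqrt_le_sqrt hsq
  have habs3 : ∀ a b c : ℝ, |a - b - c| ≤ |a| + |b| + |c| := by
    intro a b c
    rw [sub_eq_add_neg, sub_eq_add_neg]
    calc |a + -b + -c| ≤ |a| + |-b| + |-c| := abs_add_three _ _ _
      _ = |a| + |b| + |c| := by rw [abs_neg, abs_neg]
  have hzbound : ∀ p ∈ A, ∀ i, |p.2.2.2 i| ≤ Rz := by
    intro p hp i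
    obtain ⟨hpd, -, hpz, -, -, -, -⟩ := id hp
    have hzi : p.2.2.2 i = Pin i - p.1 i - D i i * p.2.2.1 i := by
      have := congrFun hpz i
      simp only [Pi.sub_apply, Pi.zero_apply] at this
      rw [hDmv] at this
      linarith
    have h1 : |Pin i| ≤ ‖Pin‖ := by
      have := norm_le_pi_norm Pin i; rwa [Real.norm_eq_abs] at this
    have h2 : |p.1 i| ≤ ‖dlo‖ + ‖dhi‖ := by
      have hlo := norm_le_pi_norm dlo i
      have hhi := norm_le_pi_norm dhi i
      rw [Real.norm_eq_abs] at hlo hhi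
      have hl : dlo i ≤ p.1 i := hpd.1 i
      have hh : p.1 i ≤ dhi i := hpd.2 i
      rw [abs_le]
      constructor
      · have := neg_abs_le (dlo i); have := norm_nonneg dhi; linarith
      · have := le_abs_self (dhi i); have := norm_nonneg dlo; linarith
    have h3 : |D i i * p.2.2.1 i| ≤ Dmax * R := by
      rw [abs_mul, abs_of_pos (hDpos i)]
      exact mul_le_mul (hDmaxle i) (hωbound p hp i) (abs_nonneg _) hDmaxpos.le
    rw [hzi]
    calc |Pin i - p.1 i - D i i * p.2.2.1 i|
        ≤ |Pin i| + |p.1 i| + |D i i * p.2.2.1 i| := habs3 _ _ _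
      _ ≤ Rz := by rw [hRz]; linarith
  -- compactness
  have hKcomp : IsCompact ((Set.Icc dlo dhi) ×ˢ (Set.Icc Plo Phi) ×ˢ
      (Metric.closedBall (0 : Fin n → ℝ) R) ×ˢ (Metric.closedBall (0 : Fin n → ℝ) Rz)) :=
    isCompact_Icc.prod (isCompact_Icc.prod
      ((isCompact_closedBall _ _).prod (isCompact_closedBall _ _)))
  have hAsub : A ⊆ (Set.Icc dlo dhi) ×ˢ (Set.Icc Plo Phi) ×ˢ
      (Metric.closedBall (0 : Fin n → ℝ) R) ×ˢ (Metric.closedBall (0 : Fin n → ℝ) Rz) := by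
    intro p hp
    obtain ⟨hpd, -, -, hpy, -, -, -⟩ := id hp
    refine ⟨hpd, hpy, ?_, ?_⟩
    · rw [Metric.mem_closedBall, dist_zero_right]
      rw [pi_norm_le_iff_of_nonneg hR0]
      intro i; rw [Real.norm_eq_abs]; exact hωbound p hp i
    · rw [Metric.mem_closedBall, dist_zero_right]
      rw [pi_norm_le_iff_of_nonneg hRz0]
      intro i; rw [Real.norm_eq_abs]; exact hzbound p hp i
  have hAcomp : IsCompact A := hKcomp.of_isClosed_subset hAclosed hAsub
  -- the minimizer
  obtain ⟨ps, hpsA, hpsmin⟩ := hAcomp.exists_isMinOn ⟨p0, hp0A⟩ hGcont.continuousOn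
  have hmin : ∀ q ∈ A, G ps ≤ G q := fun q hq => isMinOn_iff.mp hpsmin q hq
  obtain ⟨hpd, hcy, hcz, hpy, ⟨θs, hθs⟩, ⟨Ps, hPs⟩, hGM⟩ := hpsA
  have hθs' : B.mulVec (Cᵀ.mulVec θs) = ps.2.1 := by rw [← hcomp]; exact hθs
  have hPs' : C.mulVec Ps = ps.2.2.2 := by rw [← hcomp2]; exact hPs
  refine ⟨ps.1, θs, ps.2.2.1, Ps, fun i => ⟨hpd.1 i, hpd.2 i⟩, ?_, ?_, ?_, ?_⟩
  · rw [hPs']; exact hcz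
  · rw [hassoc, hθs']; exact hcy
  · intro e
    rw [hθs']
    exact ⟨hpy.1 e, hpy.2 e⟩
  · intro d' θh' ω' P' h1' h2' h3' h4'
    set q : (Fin n → ℝ) × (Fin l → ℝ) × (Fin n → ℝ) × (Fin n → ℝ) :=
      (d', B.mulVec (Cᵀ.mulVec θh'), ω', C.mulVec P') with hq'
    by_cases hqM : G q ≤ M
    · have hqA : q ∈ A := by
        refine ⟨Set.mem_Icc.mpr ⟨fun i => (h1' i).1, fun i => (h1' i).2⟩, ?_, h2',
          Set.mem_Icc.mpr ⟨fun e => (h4' e).1, fun e => (h4' e).2⟩,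
          ⟨θh', hcomp θh'⟩, ⟨P', hcomp2 P'⟩, hqM⟩
        show Pin - d' - C.mulVec (B.mulVec (Cᵀ.mulVec θh')) = 0
        rw [← hassoc]; exact h3'
      exact hmin q hqA
    · have h1 : G ps ≤ M := le_trans (hmin p0 hp0A) (le_of_eq hGp0)
      exact le_trans h1 (not_le.mp hqM).le
end

section
/- Let f₀ : ℝⁿ → ℝ be convex and differentiable, and define Ψ(d, θ̂, P, ω, μ) = f₀(d) + (1/2)‖ω + u₁‖² + (1/2)‖μ + u₂‖², where u₁ = P^in − d − Dω − CP and u₂ = P^in − d − C B Cᵀ θ̂. Then Ψ is a convex function of (d, θ̂, P, ω, μ) ∈ ℝⁿ × ℝⁿ × ℝˡ × ℝⁿ × ℝⁿ. Moreover, for any point x = (d, θ̂, P, ω, μ) and any point x* = (d*, θ̂*, P*, ω*, μ*) satisfying P^in − d* − Dω* − CP* = 0 and P^in − d* − C B Cᵀ θ̂* = 0, the quantity V₁ := Ψ(x) − Ψ(x*) − ⟨∇f₀(d*) − ω* − μ*, d − d*⟩ − ⟨(I − D)ω*, ω − ω*⟩ − ⟨μ*, μ − μ*⟩ + ⟨ω*,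 C(P − P*)⟩ + ⟨μ*, C B Cᵀ(θ̂ − θ̂*)⟩ is nonnegative. -/
open Matrix

/-- The auxiliary function `Ψ(d, θ̂, P, ω, μ) = f₀(d) + (1/2)‖ω + u₁‖² + (1/2)‖μ + u₂‖²`,
with `u₁ = P^in − d − Dω − CP` and `u₂ = P^in − d − C B Cᵀ θ̂`. -/
noncomputable def Psi {n l : ℕ} (C : Matrix (Fin n) (Fin l) ℝ)
    (B : Matrix (Fin l) (Fin l) ℝ) (D : Matrix (Fin n) (Fin n) ℝ)
    (Pin : Fin n → ℝ) (f0 : (Fin n → ℝ) → ℝ)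
    (x : (Fin n → ℝ) × (Fin n → ℝ) × (Fin l → ℝ) × (Fin n → ℝ) × (Fin n → ℝ)) : ℝ :=
  f0 x.1
    + (1 / 2) * ∑ i, (x.2.2.2.1 i
        + (Pin - x.1 - D.mulVec x.2.2.2.1 - C.mulVec x.2.2.1) i) ^ 2
    + (1 / 2) * ∑ i, (x.2.2.2.2 i
        + (Pin - x.1 - (C * B * Cᵀ).mulVec x.2.1) i) ^ 2

/-!
Ψ is `f₀ ∘ fst` plus half squared norms of the affine maps `x ↦ ω + u₁` and `x ↦ μ + u₂`, hence
convex. At `x*` the residuals vanish, so these affine maps take the values `ω*` and `μ*`, and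
(using `Dᵀ = D`) the linear terms of `V₁` are exactly the pairings of `ω*`, `μ*` with the
increments of the two affine maps. Thus `V₁` is the Bregman divergence of `f₀` (nonnegative by the
gradient inequality) plus `½‖Δ(ω + u₁)‖² + ½‖Δ(μ + u₂)‖²`.
-/

theorem ConvexOn.fderiv_sub_le {E : Type*} [NormedAddCommGroup E] [NormedSpace ℝ E] {f : E → ℝ}
    (hf : ConvexOn ℝ Set.univ f) {a : E} (hfa : DifferentiableAt ℝ f a) (b : E) :
    fderiv ℝ f a (b - a) ≤ f b - f a := by
  have hline : ConvexOn ℝ Set.univ (f ∘ AffineMap.lineMap (k := ℝ) a b) := hf.comp_affineMap _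
  have hderiv : HasDerivAt (f ∘ AffineMap.lineMap (k := ℝ) a b) (fderiv ℝ f a (b - a)) 0 :=
    hfa.hasFDerivAt.comp_hasDerivAt_of_eq 0 AffineMap.hasDerivAt_lineMap
      (AffineMap.lineMap_apply_zero a b).symm
  simpa [slope_def_field] using
    hline.le_slope_of_hasDerivAt (Set.mem_univ 0) (Set.mem_univ 1) one_pos hderiv

theorem convexOn_univ_sum_sq {ι : Type*} [Fintype ι] :
    ConvexOn ℝ Set.univ fun v : ι → ℝ => ∑ i, v i ^ 2 := by
  refine ⟨convex_univ, fun x _ y _ a b ha hb hab => ?_⟩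
  simp only [Pi.add_apply, Pi.smul_apply, smul_eq_mul, Finset.mul_sum, ← Finset.sum_add_distrib]
  exact Finset.sum_le_sum fun i _ =>
    (Even.convexOn_pow even_two).2 (Set.mem_univ (x i)) (Set.mem_univ (y i)) ha hb hab

theorem ConvexOn.comp_of_map_smul_add_smul {E F : Type*} [AddCommGroup E] [Module ℝ E]
    [AddCommGroup F] [Module ℝ F] {g : F → ℝ} (hg : ConvexOn ℝ Set.univ g) {r : E → F}
    (hr : ∀ x y (a b : ℝ), a + b = 1 → r (a • x + b • y) = a • r x + b • r y) :
    ConvexOn ℝ Set.univ (g ∘ r) :=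
  ⟨convex_univ, fun x _ y _ a b ha hb hab => by
    simpa only [Function.comp_apply, hr x y a b hab, smul_eq_mul] using
      hg.2 (Set.mem_univ (r x)) (Set.mem_univ (r y)) ha hb hab⟩

theorem dotProduct_sub_le_half_sum_sq_sub {ι : Type*} [Fintype ι] (a b : ι → ℝ) :
    b ⬝ᵥ (a - b) ≤ (1 / 2) * ∑ i, a i ^ 2 - (1 / 2) * ∑ i, b i ^ 2 := by
  have key : (1 / 2) * ∑ i, a i ^ 2 - (1 / 2) * ∑ i, b i ^ 2 - b ⬝ᵥ (a - b)
      = (1 / 2) * ∑ i, (a i - b i) ^ 2 := by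
    simp only [dotProduct, Pi.sub_apply, Finset.mul_sum, ← Finset.sum_sub_distrib]
    exact Finset.sum_congr rfl fun i _ => by ring
  have : 0 ≤ (1 / 2 : ℝ) * ∑ i, (a i - b i) ^ 2 := by positivity
  linarith

section Psi

variable {n l : ℕ} (C : Matrix (Fin n) (Fin l) ℝ) (B : Matrix (Fin l) (Fin l) ℝ)
  (D : Matrix (Fin n) (Fin n) ℝ) (Pin : Fin n → ℝ) {f0 : (Fin n → ℝ) → ℝ}

theorem convexOn_Psi (hf0 : ConvexOn ℝ Set.univ f0) : ConvexOn ℝ Set.univ (Psi C B D Pin f0) := by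
  have h₁ := convexOn_univ_sum_sq.comp_of_map_smul_add_smul
    (r := fun x : (Fin n → ℝ) × (Fin n → ℝ) × (Fin l → ℝ) × (Fin n → ℝ) × (Fin n → ℝ) =>
      x.2.2.2.1 + (Pin - x.1 - D *ᵥ x.2.2.2.1 - C *ᵥ x.2.2.1)) fun x y a b hab => by
    simp only [Prod.fst_add, Prod.snd_add, Prod.smul_fst, Prod.smul_snd, mulVec_add, mulVec_smul]
    linear_combination (norm := module) hab.symm • Pin
  have h₂ := convexOn_univ_sum_sq.comp_of_map_smul_add_smul
    (r := fun x : (Fin n → ℝ) × (Fin n → ℝ) × (Fin l → ℝ) × (Fin n → ℝ) × (Fin n → ℝ) =>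
      x.2.2.2.2 + (Pin - x.1 - (C * B * Cᵀ) *ᵥ x.2.1)) fun x y a b hab => by
    simp only [Prod.fst_add, Prod.snd_add, Prod.smul_fst, Prod.smul_snd, mulVec_add, mulVec_smul]
    linear_combination (norm := module) hab.symm • Pin
  exact ((hf0.comp_linearMap (LinearMap.fst ℝ _ _)).add (h₁.smul (by norm_num))).add
    (h₂.smul (by norm_num))

theorem V1_nonneg (hD : D.IsSymm) (hf0 : ConvexOn ℝ Set.univ f0)
    {d θh ω μ ds θhs ωs μs : Fin n → ℝ} {P Ps : Fin l → ℝ} (hf0d : DifferentiableAt ℝ f0 ds)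
    (h₁ : Pin - ds - D.mulVec ωs - C.mulVec Ps = 0)
    (h₂ : Pin - ds - (C * B * Cᵀ).mulVec θhs = 0) :
    0 ≤ Psi C B D Pin f0 (d, θh, P, ω, μ) - Psi C B D Pin f0 (ds, θhs, Ps, ωs, μs)
        - (fderiv ℝ f0 ds (d - ds) - ∑ i, (ωs i + μs i) * (d i - ds i))
        - (∑ i, (ωs i - D.mulVec ωs i) * (ω i - ωs i))
        - (∑ i, μs i * (μ i - μs i))
        + (∑ i, ωs i * C.mulVec (P - Ps) i)
        + (∑ i, μs i * (C * B * Cᵀ).mulVec (θh - θhs) i) := by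
  have hf := hf0.fderiv_sub_le hf0d d
  have hq₁ := dotProduct_sub_le_half_sum_sq_sub (ω + (Pin - d - D *ᵥ ω - C *ᵥ P)) ωs
  have hq₂ := dotProduct_sub_le_half_sum_sq_sub (μ + (Pin - d - (C * B * Cᵀ) *ᵥ θh)) μs
  have e₁ : ωs ⬝ᵥ (ω + (Pin - d - D *ᵥ ω - C *ᵥ P) - ωs)
      = ∑ i, (ωs i - D.mulVec ωs i) * (ω i - ωs i) - ∑ i, ωs i * (d i - ds i)
        - ∑ i, ωs i * C.mulVec (P - Ps) i := by
    have hΔ : ω + (Pin - d - D *ᵥ ω - C *ᵥ P) - ωs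
        = (ω - ωs) - (d - ds) - D *ᵥ (ω - ωs) - C *ᵥ (P - Ps) := by
      rw [mulVec_sub, mulVec_sub]
      linear_combination h₁
    rw [hΔ, dotProduct_sub, dotProduct_sub, dotProduct_sub, dotProduct_mulVec,
      ← mulVec_transpose, hD]
    simp only [dotProduct, Pi.sub_apply, mul_sub, sub_mul, Finset.sum_sub_distrib]
    ring
  have e₂ : μs ⬝ᵥ (μ + (Pin - d - (C * B * Cᵀ) *ᵥ θh) - μs)
      = ∑ i, μs i * (μ i - μs i) - ∑ i, μs i * (d i - ds i)
        - ∑ i, μs i * (C * B * Cᵀ).mulVec (θh - θhs) i := by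
    have hΔ : μ + (Pin - d - (C * B * Cᵀ) *ᵥ θh) - μs
        = (μ - μs) - (d - ds) - (C * B * Cᵀ) *ᵥ (θh - θhs) := by
      rw [mulVec_sub]
      linear_combination h₂
    rw [hΔ, dotProduct_sub, dotProduct_sub]
    rfl
  simp only [Pi.add_apply] at hq₁ hq₂
  simp only [Psi, h₁, h₂, Pi.zero_apply, add_zero, add_mul, Finset.sum_add_distrib]
  linarith

end Psi

theorem Psi_convex_and_V1_nonneg_general
    {n l : ℕ}
    (C : Matrix (Fin n) (Fin l) ℝ)
    (B : Matrix (Fin l) (Fin l) ℝ)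
    (D : Matrix (Fin n) (Fin n) ℝ)
    (hDdiag : ∀ i j, i ≠ j → D i j = 0)
    (Pin : Fin n → ℝ)
    (f0 : (Fin n → ℝ) → ℝ)
    (hf0conv : ConvexOn ℝ Set.univ f0) (hf0diff : Differentiable ℝ f0) :
    ConvexOn ℝ Set.univ (Psi C B D Pin f0) ∧
    ∀ (d θh ω μ ds θhs ωs μs : Fin n → ℝ) (P Ps : Fin l → ℝ),
      Pin - ds - D.mulVec ωs - C.mulVec Ps = 0 →
      Pin - ds - (C * B * Cᵀ).mulVec θhs = 0 →
      0 ≤ Psi C B D Pin f0 (d, θh, P, ω, μ) - Psi C B D Pin f0 (ds, θhs, Ps, ωs, μs)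
        - (fderiv ℝ f0 ds (d - ds) - ∑ i, (ωs i + μs i) * (d i - ds i))
        - (∑ i, (ωs i - D.mulVec ωs i) * (ω i - ωs i))
        - (∑ i, μs i * (μ i - μs i))
        + (∑ i, ωs i * C.mulVec (P - Ps) i)
        + (∑ i, μs i * (C * B * Cᵀ).mulVec (θh - θhs) i) :=
  ⟨convexOn_Psi C B D Pin hf0conv, fun _ _ _ _ ds _ _ _ _ _ h₁ h₂ =>
    V1_nonneg C B D Pin (IsDiag.isSymm hDdiag) hf0conv (hf0diff ds) h₁ h₂⟩

/-- `Ψ` is convex, and the Lyapunov component `V₁` (the Bregman-type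
quantity built from `Ψ` at a point `x*` with vanishing residuals) is nonnegative. -/
theorem Psi_convex_and_V1_nonneg
    {n l : ℕ}
    (C : Matrix (Fin n) (Fin l) ℝ)
    (B : Matrix (Fin l) (Fin l) ℝ)
    (hBdiag : ∀ e f, e ≠ f → B e f = 0) (hBpos : ∀ e, 0 < B e e)
    (D : Matrix (Fin n) (Fin n) ℝ)
    (hDdiag : ∀ i j, i ≠ j → D i j = 0) (hDpos : ∀ i, 0 < D i i)
    (Pin : Fin n → ℝ)
    (f0 : (Fin n → ℝ) → ℝ)
    (hf0conv : ConvexOn ℝ Set.univ f0) (hf0diff : Differentiable ℝ f0) :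
    ConvexOn ℝ Set.univ (Psi C B D Pin f0) ∧
    ∀ (d θh ω μ ds θhs ωs μs : Fin n → ℝ) (P Ps : Fin l → ℝ),
      Pin - ds - D.mulVec ωs - C.mulVec Ps = 0 →
      Pin - ds - (C * B * Cᵀ).mulVec θhs = 0 →
      0 ≤ Psi C B D Pin f0 (d, θh, P, ω, μ) - Psi C B D Pin f0 (ds, θhs, Ps, ωs, μs)
        - (fderiv ℝ f0 ds (d - ds) - ∑ i, (ωs i + μs i) * (d i - ds i))
        - (∑ i, (ωs i - D.mulVec ωs i) * (ω i - ωs i))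
        - (∑ i, μs i * (μ i - μs i))
        + (∑ i, ωs i * C.mulVec (P - Ps) i)
        + (∑ i, μs i * (C * B * Cᵀ).mulVec (θh - θhs) i) :=
  Psi_convex_and_V1_nonneg_general C B D hDdiag Pin f0 hf0conv hf0diff
end
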